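/- arXiv:2007.02708 — 5 statements merged into one kernel-verified Lean document; each statement's English description precedes it below -/
import Mathlib

section
/- Let σ > 0, let s₁,…,s_m ∈ ℝ, let λ* ∈ ℝ^m, and define q(t) = ∑_{j=1}^m λ*_j φ(t − s_j) where φ(t) = exp(−t²/σ²). Let t* ∈ ℝ satisfy q'(t*) = 0 and q''(t*) ≠ 0. Set c = 4√(9 − 3√6)·e^{−(3−√6)/2}, δ₀ = σ²|q''(t*)| / (√m·(4 + 2c‖λ*‖₂/σ)), δ_λ = (σ√e·|q''(t*)| / (2√(2m)))·δ₀, and C_{t*} = 2√(2m)(2σ + c‖λ*‖₂) / (|q''(t*)|·σ·√e·(4σ + c‖λ*‖₂)) + 2σ/(4σ + c‖λ*‖₂). Then for every λ ∈ ℝ^m with ‖λ − λ*‖₂ ≤ δ_λ and every t ∈ ℝ with |t − t*| ≤ δ₀ satisfying ∑_{j=1}^m λ_j φ'(t − s_j) = 0, one has |t − t*| ≤ C_{t*}·‖λ − λ*‖₂. -/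
open Real Finset

lemma aux_exp5 {y : ℝ} (hy : 0 ≤ y) :
    1 + y + y^2/2 + y^3/6 + y^4/24 + y^5/120 ≤ Real.exp y := by
  have h := Real.sum_le_exp_of_nonneg hy 6
  simp [Finset.sum_range_succ, Nat.factorial] at h
  linarith

lemma gauss3_sq (x : ℝ) (hx : 0 ≤ x) :
    x * (3 - 2*x)^2 * Real.exp (-(2*x)) ≤ (9 - 3*Real.sqrt 6) * Real.exp (-(3 - Real.sqrt 6)) := by
  set s := Real.sqrt 6 with hs
  have hs2 : s^2 = 6 := Real.sq_sqrt (by norm_num)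
  have hs0 : 0 ≤ s := Real.sqrt_nonneg 6
  have hsl : 2.449 ≤ s := by nlinarith
  have hsu : s ≤ 2.4495 := by nlinarith
  rcases le_or_gt x s with hxs | hxs
  · have hpoly : x * (3-2*x)^2 ≤ (9-3*s) * (2*x - 2 + s) := by
      nlinarith [mul_nonneg (sq_nonneg (2*x - 3 + s)) (sub_nonneg.2 hxs)]
    have hexp : Real.exp (-(2*x)) * (2*x - 2 + s) ≤ Real.exp (-(3-s)) := by
      have h1 : (2*x - 3 + s) + 1 ≤ Real.exp (2*x - 3 + s) := Real.add_one_le_exp _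
      have h2 : Real.exp (2*x-3+s) = Real.exp (-(3-s)) / Real.exp (-(2*x)) := by
        rw [← Real.exp_sub]; ring_nf
      rw [h2] at h1
      have he : 0 < Real.exp (-(2*x)) := Real.exp_pos _
      calc Real.exp (-(2*x)) * (2*x-2+s)
          ≤ Real.exp (-(2*x)) * (Real.exp (-(3-s))/Real.exp (-(2*x))) := by
            apply mul_le_mul_of_nonneg_left (by linarith) he.le
        _ = Real.exp (-(3-s)) := by field_simp
    calc x*(3-2*x)^2 * Real.exp (-(2*x))
        ≤ ((9-3*s)*(2*x-2+s)) * Real.exp (-(2*x)) :=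
          mul_le_mul_of_nonneg_right hpoly (Real.exp_pos _).le
      _ = (9-3*s) * (Real.exp (-(2*x)) * (2*x-2+s)) := by ring
      _ ≤ (9-3*s) * Real.exp (-(3-s)) :=
          mul_le_mul_of_nonneg_left hexp (by nlinarith)
  · have hx2 : (2.449:ℝ) ≤ x := le_trans hsl hxs.le
    have hQ : 1 + 2*x + 2*x^2 + (4/3)*x^3 + (2/3)*x^4 + (4/15)*x^5 ≤ Real.exp (2*x) := by
      have h := aux_exp5 (y := 2*x) (by linarith)
      nlinarith [h]
    have hRlb : 15*s - 36 ≤ (9-3*s)*Real.exp (-(3-s)) := by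
      have h1 : (s - 3) + 1 ≤ Real.exp (s-3) := Real.add_one_le_exp _
      have h2 : Real.exp (-(3-s)) = Real.exp (s-3) := by ring_nf
      rw [h2]
      nlinarith [Real.exp_pos (s-3)]
    have hpoly : x * (3-2*x)^2 ≤ (15*s-36) * (1 + 2*x + 2*x^2 + (4/3)*x^3 + (2/3)*x^4 + (4/15)*x^5) := by
      nlinarith [mul_nonneg (mul_nonneg (sub_nonneg.2 hx2) (sub_nonneg.2 hx2)) (sub_nonneg.2 hx2),
        mul_nonneg (sub_nonneg.2 hx2) (sub_nonneg.2 hx2), sub_nonneg.2 hx2,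
        mul_nonneg (mul_nonneg (mul_nonneg (sub_nonneg.2 hx2) (sub_nonneg.2 hx2)) (sub_nonneg.2 hx2)) (sub_nonneg.2 hx2),
        mul_nonneg (mul_nonneg (mul_nonneg (mul_nonneg (sub_nonneg.2 hx2) (sub_nonneg.2 hx2)) (sub_nonneg.2 hx2)) (sub_nonneg.2 hx2)) (sub_nonneg.2 hx2), hsl]
    have hQpos : 0 < 1 + 2*x + 2*x^2 + (4/3)*x^3 + (2/3)*x^4 + (4/15)*x^5 := by nlinarith
    have hsc : 0 < 15*s - 36 := by nlinarith
    calc x*(3-2*x)^2 * Real.exp (-(2*x))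
        ≤ ((15*s-36) * (1 + 2*x + 2*x^2 + (4/3)*x^3 + (2/3)*x^4 + (4/15)*x^5)) * Real.exp (-(2*x)) :=
          mul_le_mul_of_nonneg_right hpoly (Real.exp_pos _).le
      _ ≤ ((15*s-36) * Real.exp (2*x)) * Real.exp (-(2*x)) := by
          apply mul_le_mul_of_nonneg_right _ (Real.exp_pos _).le
          exact mul_le_mul_of_nonneg_left hQ hsc.le
      _ = 15*s - 36 := by rw [mul_assoc, ← Real.exp_add]; simp
      _ ≤ (9-3*s)*Real.exp (-(3-s)) := hRlb

lemma gauss3_pt (u : ℝ) :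
    ((12*u - 8*u^3) * Real.exp (-u^2))^2
      ≤ (4*Real.sqrt (9 - 3*Real.sqrt 6) * Real.exp (-((3 - Real.sqrt 6)/2)))^2 := by
  have hkey := gauss3_sq (u^2) (sq_nonneg u)
  have hs : Real.sqrt 6 ≤ 3 := by
    rw [show (3:ℝ) = Real.sqrt 9 by rw [show (9:ℝ) = 3^2 by norm_num, Real.sqrt_sq]; norm_num]
    exact Real.sqrt_le_sqrt (by norm_num)
  have h9 : (0:ℝ) ≤ 9 - 3*Real.sqrt 6 := by linarith
  have e1 : Real.exp (-u^2) ^ 2 = Real.exp (-(2*u^2)) := by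
    rw [← Real.exp_nat_mul]; ring_nf
  have e2 : Real.exp (-((3 - Real.sqrt 6)/2)) ^ 2 = Real.exp (-(3 - Real.sqrt 6)) := by
    rw [← Real.exp_nat_mul]; ring_nf
  have e3 : Real.sqrt (9 - 3*Real.sqrt 6) ^ 2 = 9 - 3*Real.sqrt 6 := Real.sq_sqrt h9
  calc ((12*u - 8*u^3) * Real.exp (-u^2))^2
      = 16 * (u^2 * (3 - 2*u^2)^2 * Real.exp (-(2*u^2))) := by
        rw [mul_pow, e1]; ring
    _ ≤ 16 * ((9 - 3*Real.sqrt 6) * Real.exp (-(3 - Real.sqrt 6))) := by linarith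
    _ = (4*Real.sqrt (9 - 3*Real.sqrt 6) * Real.exp (-((3 - Real.sqrt 6)/2)))^2 := by
        rw [mul_pow, mul_pow, e2, e3]; ring

lemma gauss1_pt (u : ℝ) : ((-2*u) * Real.exp (-u^2))^2 ≤ 2 / Real.exp 1 := by
  have h1 : 2*u^2 ≤ Real.exp (2*u^2 - 1) := by
    have := Real.add_one_le_exp (2*u^2 - 1); linarith
  have h2 : Real.exp (2*u^2 - 1) = Real.exp (2*u^2) / Real.exp 1 := by
    rw [← Real.exp_sub]
  have h3 : Real.exp (-u^2) ^ 2 = 1 / Real.exp (2*u^2) := by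
    rw [← Real.exp_nat_mul, eq_div_iff (Real.exp_pos _).ne', ← Real.exp_add]
    norm_num
  have he1 : (0:ℝ) < Real.exp 1 := Real.exp_pos 1
  have he2 : (0:ℝ) < Real.exp (2*u^2) := Real.exp_pos _
  rw [mul_pow, h3]
  rw [h2] at h1
  have h1' : 2*u^2 * Real.exp 1 ≤ Real.exp (2*u^2) := (le_div_iff₀ he1).mp h1
  rw [mul_one_div, div_le_div_iff₀ he2 he1]
  nlinarith

lemma hasD0 (σ : ℝ) (x : ℝ) :
    HasDerivAt (fun t : ℝ => Real.exp (-t^2/σ^2)) ((-2*x/σ^2) * Real.exp (-x^2/σ^2)) x := by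
  have h : HasDerivAt (fun t : ℝ => -t^2/σ^2) (-2*x/σ^2) x := by
    have := ((hasDerivAt_pow 2 x).neg).div_const (σ^2)
    refine this.congr_deriv ?_; push_cast; ring
  have := h.exp
  convert this using 1; ring

lemma hasD1 (σ : ℝ) (x : ℝ) :
    HasDerivAt (fun t : ℝ => (-2*t/σ^2) * Real.exp (-t^2/σ^2))
      ((4*x^2/σ^4 - 2/σ^2) * Real.exp (-x^2/σ^2)) x := by
  have hg : HasDerivAt (fun t : ℝ => -2*t/σ^2) (-2/σ^2) x := by
    have := ((hasDerivAt_id x).const_mul (-2 : ℝ)).div_const (σ^2)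
    refine this.congr_deriv ?_; ring
  have := hg.mul (hasD0 σ x)
  refine this.congr_deriv ?_
  field_simp
  ring

lemma hasD2 (σ : ℝ) (x : ℝ) :
    HasDerivAt (fun t : ℝ => (4*t^2/σ^4 - 2/σ^2) * Real.exp (-t^2/σ^2))
      ((12*x/σ^4 - 8*x^3/σ^6) * Real.exp (-x^2/σ^2)) x := by
  have hg : HasDerivAt (fun t : ℝ => 4*t^2/σ^4 - 2/σ^2) (8*x/σ^4) x := by
    have := (((hasDerivAt_pow 2 x).const_mul (4:ℝ)).div_const (σ^4)).sub_const (2/σ^2)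
    refine this.congr_deriv ?_; push_cast; ring
  have := hg.mul (hasD0 σ x)
  refine this.congr_deriv ?_
  field_simp
  ring

lemma mvt_abs (f f' : ℝ → ℝ) (hf : ∀ x, HasDerivAt f (f' x) x) (a b : ℝ) :
    ∃ ξ, |ξ - a| ≤ |b - a| ∧ f b - f a = f' ξ * (b - a) := by
  rcases lt_trichotomy a b with h | h | h
  · obtain ⟨ξ, hmem, hξ⟩ := exists_hasDerivAt_eq_slope f f' h
      (fun x _ => (hf x).continuousAt.continuousWithinAt) (fun x _ => hf x)
    refine ⟨ξ, ?_, ?_⟩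
    · rw [abs_of_pos (sub_pos.2 hmem.1), abs_of_pos (sub_pos.2 h)]; linarith [hmem.2]
    · rw [hξ, div_mul_cancel₀ _ (sub_ne_zero.2 h.ne')]
  · exact ⟨a, by simp [h], by simp [h]⟩
  · obtain ⟨ξ, hmem, hξ⟩ := exists_hasDerivAt_eq_slope f f' h
      (fun x _ => (hf x).continuousAt.continuousWithinAt) (fun x _ => hf x)
    refine ⟨ξ, ?_, ?_⟩
    · rw [abs_of_neg (by linarith [hmem.2] : ξ - a < 0), abs_of_neg (by linarith : b - a < 0)]
      linarith [hmem.1]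
    · rw [eq_div_iff (sub_ne_zero.2 (ne_of_gt h))] at hξ
      nlinarith [hξ]

lemma abs_sum_le {m : ℕ} (f g : Fin m → ℝ) :
    |∑ j, f j * g j| ≤ Real.sqrt (∑ j, (f j)^2) * Real.sqrt (∑ j, (g j)^2) := by
  rw [← Real.sqrt_sq_eq_abs]
  refine (Real.sqrt_le_sqrt (Finset.sum_mul_sq_le_sq_mul_sq univ f g)).trans_eq ?_
  exact Real.sqrt_mul (by positivity) _

set_option maxHeartbeats 1000000 in
/-- Dependence of `|t - t*|` on `‖λ - λ*‖₂` for the Gaussian kernel. -/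
theorem stmt0 (σ : ℝ) (hσ : 0 < σ) (m : ℕ) (s lamStar : Fin m → ℝ)
    (φ q : ℝ → ℝ)
    (hφ : φ = fun t => Real.exp (-t ^ 2 / σ ^ 2))
    (hq : q = fun t => ∑ j, lamStar j * φ (t - s j))
    (tStar : ℝ)
    (hq' : deriv q tStar = 0)
    (hq'' : deriv (deriv q) tStar ≠ 0)
    (c δ₀ δlam C : ℝ)
    (hc : c = 4 * Real.sqrt (9 - 3 * Real.sqrt 6) * Real.exp (-((3 - Real.sqrt 6) / 2)))
    (hδ₀ : δ₀ = σ ^ 2 * |deriv (deriv q) tStar| /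
      (Real.sqrt m * (4 + 2 * c * Real.sqrt (∑ j, (lamStar j) ^ 2) / σ)))
    (hδlam : δlam = (σ * Real.sqrt (Real.exp 1) * |deriv (deriv q) tStar| /
      (2 * Real.sqrt (2 * m))) * δ₀)
    (hC : C = 2 * Real.sqrt (2 * m) * (2 * σ + c * Real.sqrt (∑ j, (lamStar j) ^ 2)) /
        (|deriv (deriv q) tStar| * σ * Real.sqrt (Real.exp 1) *
          (4 * σ + c * Real.sqrt (∑ j, (lamStar j) ^ 2)))
      + 2 * σ / (4 * σ + c * Real.sqrt (∑ j, (lamStar j) ^ 2))) :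
    ∀ lam : Fin m → ℝ, ∀ t : ℝ,
      Real.sqrt (∑ j, (lam j - lamStar j) ^ 2) ≤ δlam →
      |t - tStar| ≤ δ₀ →
      (∑ j, lam j * deriv φ (t - s j)) = 0 →
      |t - tStar| ≤ C * Real.sqrt (∑ j, (lam j - lamStar j) ^ 2) := by
  intro lam t hlam ht hroot
  subst hφ hq
  -- notation
  set f1 : ℝ → ℝ := fun x => (-2*x/σ^2) * Real.exp (-x^2/σ^2) with hf1
  set f2 : ℝ → ℝ := fun x => (4*x^2/σ^4 - 2/σ^2) * Real.exp (-x^2/σ^2) with hf2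
  set f3 : ℝ → ℝ := fun x => (12*x/σ^4 - 8*x^3/σ^6) * Real.exp (-x^2/σ^2) with hf3
  set q1 : ℝ → ℝ := fun x => ∑ j, lamStar j * f1 (x - s j) with hq1
  set q2 : ℝ → ℝ := fun x => ∑ j, lamStar j * f2 (x - s j) with hq2
  set q3 : ℝ → ℝ := fun x => ∑ j, lamStar j * f3 (x - s j) with hq3
  have shift : ∀ (g g' : ℝ → ℝ), (∀ y, HasDerivAt g (g' y) y) →
      ∀ (a x : ℝ), HasDerivAt (fun u => g (u - a)) (g' (x - a)) x := by
    intro g g' hg a x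
    have := (hg (x - a)).comp x ((hasDerivAt_id x).sub_const a)
    exact this.congr_deriv (mul_one _)
  have hDq : ∀ x, HasDerivAt (fun u => ∑ j, lamStar j *
      Real.exp (-(u - s j) ^ 2 / σ ^ 2)) (q1 x) x := by
    intro x
    exact HasDerivAt.fun_sum fun j _ =>
      (shift _ _ (fun y => hasD0 σ y) (s j) x).const_mul (lamStar j)
  have hDq1 : ∀ x, HasDerivAt q1 (q2 x) x := by
    intro x
    exact HasDerivAt.fun_sum fun j _ =>
      (shift _ _ (fun y => hasD1 σ y) (s j) x).const_mul (lamStar j)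
  have hDq2 : ∀ x, HasDerivAt q2 (q3 x) x := by
    intro x
    exact HasDerivAt.fun_sum fun j _ =>
      (shift _ _ (fun y => hasD2 σ y) (s j) x).const_mul (lamStar j)
  have hdq : deriv (fun u => ∑ j, lamStar j * Real.exp (-(u - s j) ^ 2 / σ ^ 2)) = q1 :=
    funext fun x => (hDq x).deriv
  have hdφ : deriv (fun u : ℝ => Real.exp (-u ^ 2 / σ ^ 2)) = f1 :=
    funext fun x => (hasD0 σ x).deriv
  rw [hdq] at hq' hq'' hδ₀ hδlam hC
  have hd2 : deriv q1 tStar = q2 tStar := (hDq1 tStar).deriv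
  rw [hd2] at hq'' hδ₀ hδlam hC
  rw [hdφ] at hroot
  -- basic positivity facts
  set a := |q2 tStar| with ha_def
  set L := Real.sqrt (∑ j, (lamStar j)^2) with hL_def
  set D := Real.sqrt (∑ j, (lam j - lamStar j)^2) with hD_def
  have hA : 0 < a := abs_pos.2 hq''
  have hc0 : 0 ≤ c := by rw [hc]; positivity
  have hL0 : 0 ≤ L := Real.sqrt_nonneg _
  have hD0 : 0 ≤ D := Real.sqrt_nonneg _
  have hcL0 : 0 ≤ c * L := mul_nonneg hc0 hL0
  have h4σ2 : 0 < 4*σ + 2*(c*L) := by linarith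
  have h4σ1 : 0 < 4*σ + c*L := by linarith
  have hse : 0 < Real.sqrt (Real.exp 1) := Real.sqrt_pos.2 (Real.exp_pos 1)
  have hC0 : 0 ≤ C := by
    rw [hC]
    have h1 : 0 ≤ 2 * Real.sqrt (2*m) * (2*σ + c*L) := by positivity
    have h2 : 0 ≤ a * σ * Real.sqrt (Real.exp 1) * (4*σ + c*L) := by positivity
    have h3 : 0 ≤ 2*σ / (4*σ + c*L) := by positivity
    have := div_nonneg h1 h2
    linarith
  by_cases htt : t = tStar
  · rw [htt]
    simp only [sub_self, abs_zero]
    exact mul_nonneg hC0 hD0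
  -- now t ≠ tStar
  have httabs : 0 < |t - tStar| := abs_pos.2 (sub_ne_zero.2 htt)
  have hm : 0 < m := by
    rcases Nat.eq_zero_or_pos m with hm0 | hm0
    · exfalso
      have h0 : Real.sqrt (m:ℝ) = 0 := by rw [hm0]; simp
      rw [h0, zero_mul, div_zero] at hδ₀
      rw [hδ₀] at ht
      linarith
    · exact hm0
  have hM : 0 < Real.sqrt m := Real.sqrt_pos.2 (by exact_mod_cast hm)
  set M := Real.sqrt m with hM_def
  -- pointwise bounds
  have hf3bd : ∀ x : ℝ, (f3 x)^2 ≤ (c/σ^3)^2 := by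
    intro x
    have hux : f3 x = ((12*(x/σ) - 8*(x/σ)^3) * Real.exp (-(x/σ)^2)) / σ^3 := by
      show (12*x/σ^4 - 8*x^3/σ^6) * Real.exp (-x^2/σ^2)
          = ((12*(x/σ) - 8*(x/σ)^3) * Real.exp (-(x/σ)^2)) / σ^3
      rw [show -(x/σ)^2 = -x^2/σ^2 from by ring]
      ring
    calc (f3 x)^2
        = ((12*(x/σ) - 8*(x/σ)^3) * Real.exp (-(x/σ)^2))^2 / (σ^3)^2 := by rw [hux]; ring
      _ ≤ (4*Real.sqrt (9 - 3*Real.sqrt 6) * Real.exp (-((3 - Real.sqrt 6)/2)))^2 / (σ^3)^2 :=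
          div_le_div_of_nonneg_right (gauss3_pt (x/σ)) (by positivity)
      _ = (c/σ^3)^2 := by rw [hc]; ring
  have hf1bd : ∀ x : ℝ, (f1 x)^2 ≤ (2/Real.exp 1) / σ^2 := by
    intro x
    have hux : f1 x = ((-2*(x/σ)) * Real.exp (-(x/σ)^2)) / σ := by
      show (-2*x/σ^2) * Real.exp (-x^2/σ^2) = ((-2*(x/σ)) * Real.exp (-(x/σ)^2)) / σ
      rw [show -(x/σ)^2 = -x^2/σ^2 from by ring]
      ring
    calc (f1 x)^2
        = ((-2*(x/σ)) * Real.exp (-(x/σ)^2))^2 / σ^2 := by rw [hux]; ring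
      _ ≤ (2/Real.exp 1) / σ^2 :=
          div_le_div_of_nonneg_right (gauss1_pt (x/σ)) (by positivity)
  -- MVT twice
  obtain ⟨ξ, hξd, hξeq⟩ := mvt_abs q1 q2 hDq1 tStar t
  obtain ⟨ζ, hζd, hζeq⟩ := mvt_abs q2 q3 hDq2 tStar ξ
  -- bound on q3 ζ
  have hq3bd : |q3 ζ| ≤ M * L * (c/σ^3) := by
    have h1 : |q3 ζ| ≤ L * Real.sqrt (∑ j, (f3 (ζ - s j))^2) := by
      rw [hq3]
      exact abs_sum_le lamStar (fun j => f3 (ζ - s j))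
    have h2 : Real.sqrt (∑ j, (f3 (ζ - s j))^2) ≤ M * (c/σ^3) := by
      have hsum : ∑ j, (f3 (ζ - s j))^2 ≤ (m:ℝ) * (c/σ^3)^2 := by
        calc ∑ j, (f3 (ζ - s j))^2 ≤ ∑ _j : Fin m, (c/σ^3)^2 :=
              Finset.sum_le_sum fun j _ => hf3bd (ζ - s j)
          _ = (m:ℝ) * (c/σ^3)^2 := by simp [mul_comm]
      calc Real.sqrt (∑ j, (f3 (ζ - s j))^2) ≤ Real.sqrt ((m:ℝ) * (c/σ^3)^2) :=
            Real.sqrt_le_sqrt hsum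
        _ = M * (c/σ^3) := by
            rw [Real.sqrt_mul (Nat.cast_nonneg m), Real.sqrt_sq (by positivity)]
    calc |q3 ζ| ≤ L * Real.sqrt (∑ j, (f3 (ζ - s j))^2) := h1
      _ ≤ L * (M * (c/σ^3)) := mul_le_mul_of_nonneg_left h2 hL0
      _ = M * L * (c/σ^3) := by ring
  -- lower bound on |q2 ξ|
  have hδ0nn : 0 ≤ δ₀ := le_trans (abs_nonneg _) ht
  have hξδ : |ξ - tStar| ≤ δ₀ := le_trans hξd ht
  have hdiff : |q2 ξ - q2 tStar| ≤ (M * L * (c/σ^3)) * δ₀ := by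
    rw [hζeq, abs_mul]
    exact mul_le_mul hq3bd hξδ (abs_nonneg _)
      (by positivity)
  have hδval : (M * L * (c/σ^3)) * δ₀ = a * (c*L) / (4*σ + 2*(c*L)) := by
    rw [hδ₀]
    have hd1 : (4 + 2 * c * L / σ) ≠ 0 := by positivity
    field_simp
  have hq2ξ : a * ((4*σ + c*L)/(4*σ + 2*(c*L))) ≤ |q2 ξ| := by
    have h1 : a - |q2 ξ| ≤ |q2 ξ - q2 tStar| := by
      rw [ha_def]
      have := abs_sub_abs_le_abs_sub (q2 tStar) (q2 ξ)
      rw [abs_sub_comm] at this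
      linarith
    have h2 : a * ((4*σ + c*L)/(4*σ + 2*(c*L))) = a - a * (c*L) / (4*σ + 2*(c*L)) := by
      field_simp
      ring
    rw [h2]
    rw [hδval] at hdiff
    linarith
  -- root equation
  have hq1star : q1 tStar = 0 := hq'
  have hsumroot : q1 t = -(∑ j, (lam j - lamStar j) * f1 (t - s j)) := by
    rw [hq1]
    have hsplit : ∑ j, (lam j - lamStar j) * f1 (t - s j)
        = (∑ j, lam j * f1 (t - s j)) - ∑ j, lamStar j * f1 (t - s j) := by
      rw [← Finset.sum_sub_distrib]
      congr 1
      funext j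
      ring
    rw [hsplit, hroot]
    ring
  -- Cauchy-Schwarz on the perturbation term
  have hpert : |∑ j, (lam j - lamStar j) * f1 (t - s j)|
      ≤ D * (M * (Real.sqrt 2 / (σ * Real.sqrt (Real.exp 1)))) := by
    have h1 := abs_sum_le (fun j => lam j - lamStar j) (fun j => f1 (t - s j))
    have h2 : Real.sqrt (∑ j, (f1 (t - s j))^2)
        ≤ M * (Real.sqrt 2 / (σ * Real.sqrt (Real.exp 1))) := by
      have hsum : ∑ j, (f1 (t - s j))^2 ≤ (m:ℝ) * ((2/Real.exp 1)/σ^2) := by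
        calc ∑ j, (f1 (t - s j))^2 ≤ ∑ _j : Fin m, ((2/Real.exp 1)/σ^2) :=
              Finset.sum_le_sum fun j _ => hf1bd (t - s j)
          _ = (m:ℝ) * ((2/Real.exp 1)/σ^2) := by simp [mul_comm]
      have hval : (Real.sqrt 2 / (σ * Real.sqrt (Real.exp 1)))^2 = (2/Real.exp 1)/σ^2 := by
        rw [div_pow, mul_pow, Real.sq_sqrt (by norm_num : (0:ℝ) ≤ 2),
          Real.sq_sqrt (Real.exp_pos 1).le]
        field_simp
      calc Real.sqrt (∑ j, (f1 (t - s j))^2) ≤ Real.sqrt ((m:ℝ) * ((2/Real.exp 1)/σ^2)) :=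
            Real.sqrt_le_sqrt hsum
        _ = M * (Real.sqrt 2 / (σ * Real.sqrt (Real.exp 1))) := by
            rw [Real.sqrt_mul (Nat.cast_nonneg m), ← hval, Real.sqrt_sq (by positivity)]
    calc |∑ j, (lam j - lamStar j) * f1 (t - s j)|
        ≤ D * Real.sqrt (∑ j, (f1 (t - s j))^2) := h1
      _ ≤ D * (M * (Real.sqrt 2 / (σ * Real.sqrt (Real.exp 1)))) :=
          mul_le_mul_of_nonneg_left h2 hD0
  -- combine
  have hmain : |q2 ξ| * |t - tStar| ≤ D * (M * (Real.sqrt 2 / (σ * Real.sqrt (Real.exp 1)))) := by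
    rw [← abs_mul, ← hξeq, hq1star, sub_zero, hsumroot, abs_neg]
    exact hpert
  set W := Real.sqrt 2 / (σ * Real.sqrt (Real.exp 1)) with hW_def
  set B := a * ((4*σ + c*L)/(4*σ + 2*(c*L))) with hB_def
  have hB0 : 0 < B := by
    rw [hB_def]
    positivity
  have hBt : B * |t - tStar| ≤ D * (M * W) :=
    le_trans (mul_le_mul_of_nonneg_right hq2ξ (abs_nonneg _)) hmain
  have hstep : |t - tStar| ≤ D * (M * W) / B := (le_div_iff₀' hB0).mpr hBt
  -- identify the constant
  have hsqrt2m : Real.sqrt (2 * (m:ℝ)) = Real.sqrt 2 * M := by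
    rw [hM_def, ← Real.sqrt_mul (by norm_num : (0:ℝ) ≤ 2)]
  have hfirst : M * W / B = 2 * Real.sqrt (2*(m:ℝ)) * (2*σ + c*L) /
      (a * σ * Real.sqrt (Real.exp 1) * (4*σ + c*L)) := by
    rw [hsqrt2m, hW_def, hB_def]
    field_simp
    ring
  calc |t - tStar| ≤ D * (M * W) / B := hstep
    _ = D * (M * W / B) := by ring
    _ ≤ D * C := by
        apply mul_le_mul_of_nonneg_left _ hD0
        rw [hfirst, hC]
        have : 0 ≤ 2*σ/(4*σ + c*L) := by positivity
        linarith
    _ = C * D := mul_comm D C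
end

section
/- Let σ > 0, s₁,…,s_m ∈ ℝ, λ* ∈ ℝ^m, q(t) = ∑_{j=1}^m λ*_j φ(t − s_j) where φ(t) = exp(−t²/σ²), and t* with q''(t*) ≠ 0. Set c = 4√(9 − 3√6)·e^{−(3−√6)/2} and δ₀ = σ²|q''(t*)| / (√m·(4 + 2c‖λ*‖₂/σ)). Then for every t ∈ ℝ with |t − t*| ≤ δ₀, one has |∑_{j=1}^m λ*_j φ''(t − s_j)| ≥ |q''(t*)|·(1 − c‖λ*‖₂ / (4σ + 2c‖λ*‖₂)). -/
-- key pointwise bound on the scaled third derivative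
lemma key_bound (u : ℝ) :
    |12 * u - 8 * u ^ 3| ≤
      4 * Real.sqrt (9 - 3 * Real.sqrt 6) * Real.exp (-((3 - Real.sqrt 6) / 2)) *
        Real.exp (u ^ 2) := by
  set s6 := Real.sqrt 6 with hs6def
  have hs6nn : 0 ≤ s6 := Real.sqrt_nonneg 6
  have h6 : s6 ^ 2 = 6 := Real.sq_sqrt (by norm_num)
  have hs6l : (2.449 : ℝ) ≤ s6 := by nlinarith
  have hs6u : s6 ≤ 2.4495 := by nlinarith
  set a : ℝ := (3 - s6) / 2 with ha_def
  have ha0 : 0 ≤ a := by simp only [ha_def]; linarith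
  set s : ℝ := Real.sqrt a with hs_def
  have hsnn : 0 ≤ s := Real.sqrt_nonneg a
  have hs2 : s ^ 2 = (3 - s6) / 2 := Real.sq_sqrt ha0
  have hsl : (0.524 : ℝ) ≤ s := by nlinarith
  have hsqrt_eq : Real.sqrt (9 - 3 * s6) = s6 * s := by
    have h9 : 9 - 3 * s6 = s6 ^ 2 * a := by rw [h6]; simp only [ha_def]; ring
    rw [h9, Real.sqrt_mul (by positivity), Real.sqrt_sq hs6nn]
  rw [hsqrt_eq]
  -- work with v = |u|
  set v := |u| with hv_def
  have hvnn : 0 ≤ v := abs_nonneg u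
  have hv2 : v ^ 2 = u ^ 2 := sq_abs u
  have habs : |12 * u - 8 * u ^ 3| = |12 * v - 8 * v ^ 3| := by
    rcases abs_cases u with ⟨h1, _⟩ | ⟨h1, _⟩
    · rw [hv_def, h1]
    · rw [hv_def, h1]
      rw [show 12 * -u - 8 * (-u) ^ 3 = -(12 * u - 8 * u ^ 3) by ring, abs_neg]
  rw [habs, ← hv2]
  have hexp1 : 1 + (v ^ 2 - a) ≤ Real.exp (v ^ 2 - a) := by
    have := Real.add_one_le_exp (v ^ 2 - a); linarith
  have hexp_shift : Real.exp (-a) * Real.exp (v ^ 2) = Real.exp (v ^ 2 - a) := by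
    rw [← Real.exp_add]; ring_nf
  have hcpos : 0 < 4 * (s6 * s) * Real.exp (-a) := by
    have : 0 < s6 := by linarith
    have : 0 < s := by linarith
    positivity
  rw [abs_le]
  constructor
  · -- -(c e^{v²}) ≤ 12v - 8v³, i.e. 8v³ - 12v ≤ c e^{v²}
    have hclow : (3.71 : ℝ) ≤ 4 * (s6 * s) * Real.exp (-a) := by
      have h1 : 1 - a ≤ Real.exp (-a) := by
        have := Real.add_one_le_exp (-a); linarith
      have h2 : (0.7245 : ℝ) ≤ 1 - a := by simp only [ha_def]; linarith
      have h3 : (5.133 : ℝ) ≤ 4 * (s6 * s) := by nlinarith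
      nlinarith [Real.exp_pos (-a)]
    have hcube : (1 + v ^ 2 / 3) ^ 3 ≤ Real.exp (v ^ 2) := by
      have h1 : 1 + v ^ 2 / 3 ≤ Real.exp (v ^ 2 / 3) := by
        have := Real.add_one_le_exp (v ^ 2 / 3); linarith
      have h2 : (1 + v ^ 2 / 3) ^ 3 ≤ Real.exp (v ^ 2 / 3) ^ 3 := by
        apply pow_le_pow_left₀ (by positivity) h1
      calc (1 + v ^ 2 / 3) ^ 3 ≤ Real.exp (v ^ 2 / 3) ^ 3 := h2
        _ = Real.exp (v ^ 2) := by rw [← Real.exp_nat_mul]; ring_nf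
    have hpoly : 8 * v ^ 3 - 12 * v ≤ 3.71 * (1 + v ^ 2 / 3) ^ 3 := by
      nlinarith [sq_nonneg (v - 2), sq_nonneg (v ^ 2 - 2 * v), sq_nonneg (v ^ 3 - 6 * v),
        sq_nonneg v, mul_nonneg hvnn (sq_nonneg (v - 2)), sq_nonneg (v ^ 2 - 3),
        mul_nonneg (mul_nonneg hvnn hvnn) (sq_nonneg (v - 2))]
    have : 3.71 * (1 + v ^ 2 / 3) ^ 3 ≤ 4 * (s6 * s) * Real.exp (-a) * Real.exp (v ^ 2) := by
      calc 3.71 * (1 + v ^ 2 / 3) ^ 3 ≤ (4 * (s6 * s) * Real.exp (-a)) * (1 + v ^ 2 / 3) ^ 3 := by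
            apply mul_le_mul_of_nonneg_right hclow (by positivity)
        _ ≤ 4 * (s6 * s) * Real.exp (-a) * Real.exp (v ^ 2) := by
            apply mul_le_mul_of_nonneg_left hcube (le_of_lt hcpos)
    linarith
  · -- 12v - 8v³ ≤ c e^{v²}
    have hid : 4 * s6 * s * (1 + v ^ 2 - s ^ 2) - (12 * v - 8 * v ^ 3) =
        8 * (v - s) ^ 2 * (v + s * (4 + s6) / 2) := by
      linear_combination (-16 * s - 8 * s * s6 + 24 * v + 8 * v * s6) * hs2 + (4 * s - 4 * v) * h6
    have hfac : 0 ≤ 8 * (v - s) ^ 2 * (v + s * (4 + s6) / 2) := by positivity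
    have step1 : 12 * v - 8 * v ^ 3 ≤ 4 * s6 * s * (1 + v ^ 2 - a) := by
      have ha_s : a = s ^ 2 := by rw [hs2]
      have h := hfac
      rw [← hid] at h
      rw [ha_s]
      linarith
    have step2 : 4 * s6 * s * (1 + v ^ 2 - a) ≤ 4 * (s6 * s) * Real.exp (-a) * Real.exp (v ^ 2) := by
      have h4 : 0 ≤ 4 * (s6 * s) := by positivity
      calc 4 * s6 * s * (1 + v ^ 2 - a) ≤ 4 * (s6 * s) * Real.exp (v ^ 2 - a) := by
            rw [show 4 * s6 * s = 4 * (s6 * s) by ring]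
            apply mul_le_mul_of_nonneg_left _ h4
            linarith [hexp1]
        _ = 4 * (s6 * s) * Real.exp (-a) * Real.exp (v ^ 2) := by
            rw [show 4 * (s6 * s) * Real.exp (-a) * Real.exp (v ^ 2)
              = 4 * (s6 * s * (Real.exp (-a) * Real.exp (v ^ 2))) by ring, hexp_shift]
            ring
    linarith

/-- Lower bound on `|∑ λ*_j φ''(t - s_j)|` for `t` within `δ₀` of `t*`. -/
theorem stmt3 (σ : ℝ) (hσ : 0 < σ) (m : ℕ) (s lamStar : Fin m → ℝ)
    (φ : ℝ → ℝ)
    (hφ : φ = fun t => Real.exp (-t ^ 2 / σ ^ 2))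
    (tStar : ℝ)
    (hq'' : (∑ j, lamStar j * deriv (deriv φ) (tStar - s j)) ≠ 0)
    (c δ₀ : ℝ)
    (hc : c = 4 * Real.sqrt (9 - 3 * Real.sqrt 6) * Real.exp (-((3 - Real.sqrt 6) / 2)))
    (hδ₀ : δ₀ = σ ^ 2 * |∑ j, lamStar j * deriv (deriv φ) (tStar - s j)| /
      (Real.sqrt m * (4 + 2 * c * Real.sqrt (∑ j, (lamStar j) ^ 2) / σ))) :
    ∀ t : ℝ, |t - tStar| ≤ δ₀ →
      |∑ j, lamStar j * deriv (deriv φ) (t - s j)| ≥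
        |∑ j, lamStar j * deriv (deriv φ) (tStar - s j)| *
          (1 - c * Real.sqrt (∑ j, (lamStar j) ^ 2) /
            (4 * σ + 2 * c * Real.sqrt (∑ j, (lamStar j) ^ 2))) := by
  intro t ht
  have hσ' : σ ≠ 0 := ne_of_gt hσ
  have hcnn : 0 ≤ c := by
    rw [hc]; positivity
  -- derivatives of φ
  have h1 : ∀ x : ℝ, HasDerivAt φ (φ x * (-2 * x / σ ^ 2)) x := by
    intro x
    have hi : HasDerivAt (fun y : ℝ => -y ^ 2 / σ ^ 2) (-2 * x / σ ^ 2) x := by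
      have := ((hasDerivAt_pow 2 x).neg.div_const (σ ^ 2))
      simpa using this.congr_deriv (by push_cast; ring)
    have := hi.exp
    rw [hφ]
    simpa using this
  have hd1 : deriv φ = fun x => φ x * (-2 * x / σ ^ 2) := funext fun x => (h1 x).deriv
  have h2 : ∀ x : ℝ, HasDerivAt (deriv φ) (φ x * (4 * x ^ 2 / σ ^ 4 - 2 / σ ^ 2)) x := by
    intro x
    rw [hd1]
    have hx : HasDerivAt (fun y : ℝ => -2 * y / σ ^ 2) (-2 / σ ^ 2) x := by
      simpa using ((hasDerivAt_id x).const_mul (-2 : ℝ)).div_const (σ ^ 2)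
    have := (h1 x).mul hx
    exact this.congr_deriv (by ring)
  have hd2 : deriv (deriv φ) = fun x => φ x * (4 * x ^ 2 / σ ^ 4 - 2 / σ ^ 2) :=
    funext fun x => (h2 x).deriv
  have h3 : ∀ x : ℝ, HasDerivAt (fun y => φ y * (4 * y ^ 2 / σ ^ 4 - 2 / σ ^ 2))
      (φ x * (12 * x / σ ^ 4 - 8 * x ^ 3 / σ ^ 6)) x := by
    intro x
    have hx : HasDerivAt (fun y : ℝ => 4 * y ^ 2 / σ ^ 4 - 2 / σ ^ 2) (8 * x / σ ^ 4) x := by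
      have := (((hasDerivAt_pow 2 x).const_mul (4 : ℝ)).div_const (σ ^ 4)).sub_const (2 / σ ^ 2)
      simpa using this.congr_deriv (by push_cast; ring)
    have := (h1 x).mul hx
    exact this.congr_deriv (by ring)
  -- the function F and its derivative
  set g2 : ℝ → ℝ := fun x => φ x * (4 * x ^ 2 / σ ^ 4 - 2 / σ ^ 2) with hg2
  set g3 : ℝ → ℝ := fun x => φ x * (12 * x / σ ^ 4 - 8 * x ^ 3 / σ ^ 6) with hg3
  set F : ℝ → ℝ := fun x => ∑ j, lamStar j * g2 (x - s j) with hF_def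
  have hF : ∀ x : ℝ, HasDerivAt F (∑ j, lamStar j * g3 (x - s j)) x := by
    intro x
    apply HasDerivAt.fun_sum
    intro j _
    have hcomp : HasDerivAt (fun y => g2 (y - s j)) (g3 (x - s j)) x := by
      have := (h3 (x - s j)).comp x ((hasDerivAt_id x).sub_const (s j))
      exact this.congr_deriv (by simp [hg3])
    exact hcomp.const_mul (lamStar j)
  -- pointwise bound on g3
  have hg3bound : ∀ x : ℝ, |g3 x| ≤ c / σ ^ 3 := by
    intro x
    have key := key_bound (x / σ)
    rw [← hc] at key
    have e1 : (x / σ) ^ 2 = x ^ 2 / σ ^ 2 := div_pow x σ 2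
    have e2 : 12 * (x / σ) - 8 * (x / σ) ^ 3 = σ ^ 3 * (12 * x / σ ^ 4 - 8 * x ^ 3 / σ ^ 6) := by
      field_simp
    have hσ3 : (0:ℝ) < σ ^ 3 := by positivity
    rw [e1, e2, abs_mul, abs_of_pos hσ3] at key
    -- key : σ^3 * |12x/σ⁴ - 8x³/σ⁶| ≤ c * exp (x²/σ²)
    have hφx : φ x = Real.exp (-(x ^ 2 / σ ^ 2)) := by rw [hφ]; simp [neg_div]
    have : |g3 x| = Real.exp (-(x ^ 2 / σ ^ 2)) * |12 * x / σ ^ 4 - 8 * x ^ 3 / σ ^ 6| := by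
      rw [hg3]; simp only [abs_mul, hφx, Real.abs_exp]
    rw [this]
    have hP : |12 * x / σ ^ 4 - 8 * x ^ 3 / σ ^ 6| ≤ c * Real.exp (x ^ 2 / σ ^ 2) / σ ^ 3 := by
      rw [le_div_iff₀ hσ3]; linarith
    calc Real.exp (-(x ^ 2 / σ ^ 2)) * |12 * x / σ ^ 4 - 8 * x ^ 3 / σ ^ 6|
        ≤ Real.exp (-(x ^ 2 / σ ^ 2)) * (c * Real.exp (x ^ 2 / σ ^ 2) / σ ^ 3) := by
          apply mul_le_mul_of_nonneg_left hP (le_of_lt (Real.exp_pos _))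
      _ = c / σ ^ 3 := by
          rw [Real.exp_neg]
          field_simp
  -- Cauchy-Schwarz bound on the derivative of F
  set nrm := Real.sqrt (∑ j, (lamStar j) ^ 2) with hnrm
  have hnrmnn : 0 ≤ nrm := Real.sqrt_nonneg _
  have hFbound : ∀ x : ℝ, |∑ j, lamStar j * g3 (x - s j)| ≤ nrm * (Real.sqrt m * (c / σ ^ 3)) := by
    intro x
    have hcs := Real.sum_mul_le_sqrt_mul_sqrt Finset.univ lamStar (fun j => g3 (x - s j))
    have hcs' := Real.sum_mul_le_sqrt_mul_sqrt Finset.univ lamStar (fun j => -g3 (x - s j))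
    have hsum : (∑ j, (g3 (x - s j)) ^ 2) ≤ (m : ℝ) * (c / σ ^ 3) ^ 2 := by
      calc (∑ j, (g3 (x - s j)) ^ 2) ≤ ∑ _j : Fin m, (c / σ ^ 3) ^ 2 := by
            apply Finset.sum_le_sum
            intro j _
            have := hg3bound (x - s j)
            nlinarith [abs_nonneg (g3 (x - s j)), sq_abs (g3 (x - s j))]
        _ = (m : ℝ) * (c / σ ^ 3) ^ 2 := by simp [Finset.sum_const]
    have hs2 : Real.sqrt (∑ j, (g3 (x - s j)) ^ 2) ≤ Real.sqrt m * (c / σ ^ 3) := by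
      have h1 : Real.sqrt (∑ j, (g3 (x - s j)) ^ 2) ≤ Real.sqrt ((m : ℝ) * (c / σ ^ 3) ^ 2) :=
        Real.sqrt_le_sqrt hsum
      have h2 : Real.sqrt ((m : ℝ) * (c / σ ^ 3) ^ 2) = Real.sqrt m * (c / σ ^ 3) := by
        rw [Real.sqrt_mul (Nat.cast_nonneg m), Real.sqrt_sq (by positivity)]
      linarith
    rw [abs_le]
    constructor
    · have : (∑ j, lamStar j * -g3 (x - s j)) ≤ nrm * (Real.sqrt m * (c / σ ^ 3)) := by
        calc (∑ j, lamStar j * -g3 (x - s j))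
            ≤ Real.sqrt (∑ j, (lamStar j) ^ 2) * Real.sqrt (∑ j, (-g3 (x - s j)) ^ 2) := hcs'
          _ = nrm * Real.sqrt (∑ j, (g3 (x - s j)) ^ 2) := by simp [hnrm]
          _ ≤ nrm * (Real.sqrt m * (c / σ ^ 3)) := by
              apply mul_le_mul_of_nonneg_left hs2 hnrmnn
      have heq : (∑ j, lamStar j * -g3 (x - s j)) = -∑ j, lamStar j * g3 (x - s j) := by
        rw [← Finset.sum_neg_distrib]; congr 1; ext j; ring
      linarith [heq ▸ this]
    · calc (∑ j, lamStar j * g3 (x - s j))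
          ≤ Real.sqrt (∑ j, (lamStar j) ^ 2) * Real.sqrt (∑ j, (g3 (x - s j)) ^ 2) := hcs
        _ ≤ nrm * (Real.sqrt m * (c / σ ^ 3)) := by
            rw [← hnrm]; apply mul_le_mul_of_nonneg_left hs2 hnrmnn
  -- mean value inequality
  set L := nrm * (Real.sqrt m * (c / σ ^ 3)) with hL
  have hLnn : 0 ≤ L := by positivity
  have hmvt : |F t - F tStar| ≤ L * |t - tStar| := by
    have := Convex.norm_image_sub_le_of_norm_hasDerivWithin_le
      (f := F) (f' := fun x => ∑ j, lamStar j * g3 (x - s j)) (s := Set.univ) (C := L)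
      (fun x _ => (hF x).hasDerivWithinAt) (fun x _ => by simpa using hFbound x)
      convex_univ (Set.mem_univ tStar) (Set.mem_univ t)
    simpa [Real.norm_eq_abs] using this
  -- rewrite the goal in terms of F
  rw [hd2] at hq'' hδ₀ ⊢
  change |F t| ≥ |F tStar| * (1 - c * nrm / (4 * σ + 2 * c * nrm))
  rw [show (∑ j, lamStar j * g2 (tStar - s j)) = F tStar from rfl] at hq'' hδ₀
  -- m ≥ 1
  have hm : m ≠ 0 := by
    rintro rfl
    simp [hF_def] at hq''
  have hsqm : (0:ℝ) < Real.sqrt m := Real.sqrt_pos.mpr (by exact_mod_cast Nat.pos_of_ne_zero hm)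
  have hQ : 0 < |F tStar| := abs_pos.mpr hq''
  have hden : (0:ℝ) < 4 * σ + 2 * c * nrm := by positivity
  have hden2 : (0:ℝ) < 4 + 2 * c * nrm / σ := by positivity
  have hLδ : L * δ₀ = |F tStar| * (c * nrm / (4 * σ + 2 * c * nrm)) := by
    rw [hδ₀, hL]
    field_simp
  have hchain : |F tStar| - |F t| ≤ L * δ₀ := by
    have h1 : |F tStar| - |F t| ≤ |F t - F tStar| := by
      have := abs_sub_abs_le_abs_sub (F tStar) (F t)
      rw [abs_sub_comm] at this
      linarith
    have h2 : L * |t - tStar| ≤ L * δ₀ := mul_le_mul_of_nonneg_left ht hLnn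
    linarith
  rw [hLδ] at hchain
  have : |F tStar| * (1 - c * nrm / (4 * σ + 2 * c * nrm)) =
      |F tStar| - |F tStar| * (c * nrm / (4 * σ + 2 * c * nrm)) := by ring
  rw [ge_iff_le, this]
  linarith
end

section
/- Let σ > 0, let s₁,…,s_m ∈ [0,1], and let t₁,…,t_k, t̃₁,…,t̃_k ∈ [0,1]. Define the m×k matrices Φ and Φ̃ by Φ_{ij} = exp(−(s_i − t_j)²/σ²) and Φ̃_{ij} = exp(−(s_i − t̃_j)²/σ²), and set E = Φ̃ − Φ. Then the Frobenius norm of E satisfies ‖E‖_F ≤ (4·e^{4/σ²}·√m / σ²)·‖t̃ − t‖₂, where ‖t̃ − t‖₂ = √(∑_{j=1}^k (t̃_j − t_j)²). -/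
lemma lip_exp_neg (a b : ℝ) (ha : 0 ≤ a) (hb : 0 ≤ b) :
    |Real.exp (-a) - Real.exp (-b)| ≤ |a - b| := by
  wlog h : b ≤ a generalizing a b
  · rw [abs_sub_comm, abs_sub_comm a b]; exact this b a hb ha (le_of_not_ge h)
  have hle : Real.exp (-a) ≤ Real.exp (-b) := Real.exp_le_exp.2 (by linarith)
  rw [abs_of_nonpos (by linarith), abs_of_nonneg (by linarith)]
  have h1 : Real.exp (-b) ≤ 1 := Real.exp_le_one_iff.2 (by linarith)
  have h2 : (-(a - b)) + 1 ≤ Real.exp (-(a - b)) := Real.add_one_le_exp _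
  have h3 : Real.exp (-a) = Real.exp (-b) * Real.exp (-(a - b)) := by
    rw [← Real.exp_add]; ring_nf
  have h4 : (0:ℝ) < Real.exp (-(a-b)) := Real.exp_pos _
  have h5 : (0:ℝ) < Real.exp (-b) := Real.exp_pos _
  nlinarith

/-- Frobenius-norm bound on the perturbation `E = Φ̃ - Φ` of the
Gaussian measurement matrix, in terms of `‖t̃ - t‖₂`. -/
theorem stmt10 (σ : ℝ) (hσ : 0 < σ) (m k : ℕ)
    (s : Fin m → ℝ) (t ttil : Fin k → ℝ)
    (hs : ∀ i, s i ∈ Set.Icc (0 : ℝ) 1)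
    (ht : ∀ j, t j ∈ Set.Icc (0 : ℝ) 1)
    (httil : ∀ j, ttil j ∈ Set.Icc (0 : ℝ) 1)
    (Φ Φtil E : Matrix (Fin m) (Fin k) ℝ)
    (hΦ : Φ = fun i j => Real.exp (-(s i - t j) ^ 2 / σ ^ 2))
    (hΦtil : Φtil = fun i j => Real.exp (-(s i - ttil j) ^ 2 / σ ^ 2))
    (hE : E = Φtil - Φ) :
    Real.sqrt (∑ i, ∑ j, (E i j) ^ 2) ≤
      (4 * Real.exp (4 / σ ^ 2) * Real.sqrt m / σ ^ 2) *
        Real.sqrt (∑ j, (ttil j - t j) ^ 2) := by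
  have hσ2 : (0:ℝ) < σ ^ 2 := by positivity
  set L : ℝ := 2 / σ ^ 2 with hL
  have hL0 : 0 ≤ L := by positivity
  -- entrywise bound
  have key : ∀ i j, (E i j) ^ 2 ≤ L ^ 2 * (ttil j - t j) ^ 2 := by
    intro i j
    have hEij : E i j = Real.exp (-((s i - ttil j) ^ 2 / σ ^ 2))
        - Real.exp (-((s i - t j) ^ 2 / σ ^ 2)) := by
      simp [hE, hΦ, hΦtil, neg_div]
      rfl
    have habs : |E i j| ≤ L * |ttil j - t j| := by
      rw [hEij]
      have h1 := lip_exp_neg ((s i - ttil j) ^ 2 / σ ^ 2) ((s i - t j) ^ 2 / σ ^ 2)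
        (by positivity) (by positivity)
      refine h1.trans ?_
      have : (s i - ttil j) ^ 2 / σ ^ 2 - (s i - t j) ^ 2 / σ ^ 2
          = ((t j - ttil j) * (2 * s i - t j - ttil j)) / σ ^ 2 := by ring
      rw [this, abs_div, abs_of_pos hσ2, hL, div_mul_eq_mul_div]
      apply div_le_div_of_nonneg_right ?_ hσ2.le
      rw [abs_mul]
      have hsi := hs i; have htj := ht j; have httilj := httil j
      simp only [Set.mem_Icc] at hsi htj httilj
      have ha : |t j - ttil j| = |ttil j - t j| := abs_sub_comm _ _
      rw [ha, mul_comm]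
      apply mul_le_mul_of_nonneg_right ?_ (abs_nonneg _)
      rw [abs_le]; constructor <;> linarith
    calc (E i j) ^ 2 = |E i j| ^ 2 := (sq_abs _).symm
      _ ≤ (L * |ttil j - t j|) ^ 2 := by
          apply pow_le_pow_left₀ (abs_nonneg _) habs
      _ = L ^ 2 * (ttil j - t j) ^ 2 := by rw [mul_pow, sq_abs]
  have hsum : ∑ i, ∑ j, (E i j) ^ 2 ≤ m * (L ^ 2 * ∑ j, (ttil j - t j) ^ 2) := by
    calc ∑ i, ∑ j, (E i j) ^ 2
        ≤ ∑ _i : Fin m, ∑ j, L ^ 2 * (ttil j - t j) ^ 2 := by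
          apply Finset.sum_le_sum; intro i _
          exact Finset.sum_le_sum fun j _ => key i j
      _ = m * (L ^ 2 * ∑ j, (ttil j - t j) ^ 2) := by
          rw [Finset.sum_const, ← Finset.mul_sum]; simp [mul_comm]
  have hstep : Real.sqrt (∑ i, ∑ j, (E i j) ^ 2)
      ≤ Real.sqrt m * L * Real.sqrt (∑ j, (ttil j - t j) ^ 2) := by
    refine (Real.sqrt_le_sqrt hsum).trans_eq ?_
    rw [Real.sqrt_mul (by positivity), Real.sqrt_mul (by positivity),
      Real.sqrt_sq hL0, ← mul_assoc]
  refine hstep.trans ?_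
  have hcoef : Real.sqrt m * L ≤ 4 * Real.exp (4 / σ ^ 2) * Real.sqrt m / σ ^ 2 := by
    have h1 : (1:ℝ) ≤ Real.exp (4 / σ ^ 2) := Real.one_le_exp (by positivity)
    have h2 : L ≤ 4 * Real.exp (4 / σ ^ 2) / σ ^ 2 := by
      rw [hL]
      apply div_le_div_of_nonneg_right ?_ hσ2.le
      nlinarith
    calc Real.sqrt m * L ≤ Real.sqrt m * (4 * Real.exp (4 / σ ^ 2) / σ ^ 2) :=
          mul_le_mul_of_nonneg_left h2 (Real.sqrt_nonneg _)
      _ = 4 * Real.exp (4 / σ ^ 2) * Real.sqrt m / σ ^ 2 := by ring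
  exact mul_le_mul_of_nonneg_right hcoef (Real.sqrt_nonneg _)
end

section
/- Let Φ ∈ ℝ^{m×k} have full column rank, let E ∈ ℝ^{m×k}, set Φ̃ = Φ + E and D = 2‖E‖₂‖Φ‖₂ + ‖E‖₂², and assume D < σ_min(Φ)². Then Φ̃ᵀΦ̃ is invertible, and the pseudo-inverses Φ† = (ΦᵀΦ)⁻¹Φᵀ and Φ̃† = (Φ̃ᵀΦ̃)⁻¹Φ̃ᵀ satisfy ‖Φ̃† − Φ†‖₂ ≤ ‖E‖₂ / σ_min(Φ)² + ((D / σ_min(Φ)⁴) / (1 − D / σ_min(Φ)²))·(‖Φ‖₂ + ‖E‖₂). -/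
open Matrix
open scoped Matrix.Norms.L2Operator

/-- The operator norm of `M` induced by the Euclidean vector norm. -/
noncomputable def opN {m n : ℕ} (M : Matrix (Fin m) (Fin n) ℝ) : ℝ :=
  sSup {x | ∃ v : Fin n → ℝ, Real.sqrt (∑ j, v j ^ 2) ≤ 1 ∧
    x = Real.sqrt (∑ i, (∑ j, M i j * v j) ^ 2)}

/-- The smallest singular value of `M`. -/
noncomputable def sminv {m n : ℕ} (M : Matrix (Fin m) (Fin n) ℝ) : ℝ :=
  sInf {x | ∃ v : Fin n → ℝ, Real.sqrt (∑ j, v j ^ 2) = 1 ∧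
    x = Real.sqrt (∑ i, (∑ j, M i j * v j) ^ 2)}

namespace Stmt15Aux

variable {m n k : ℕ}

noncomputable def eV {n : ℕ} (v : Fin n → ℝ) : EuclideanSpace ℝ (Fin n) :=
  (WithLp.equiv 2 _).symm v

lemma norm_eV (v : Fin n → ℝ) : ‖eV v‖ = Real.sqrt (∑ j, v j ^ 2) := by
  rw [EuclideanSpace.norm_eq]
  congr 1
  refine Finset.sum_congr rfl fun j _ => ?_
  simp [eV, sq_abs]

noncomputable def mCLM (M : Matrix (Fin m) (Fin n) ℝ) :
    EuclideanSpace ℝ (Fin n) →L[ℝ] EuclideanSpace ℝ (Fin m) :=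
  ((toEuclideanLin (𝕜 := ℝ) (m := Fin m) (n := Fin n)).trans
    LinearMap.toContinuousLinearMap) M

lemma norm_mCLM (M : Matrix (Fin m) (Fin n) ℝ) : ‖M‖ = ‖mCLM M‖ := rfl

lemma mCLM_apply (M : Matrix (Fin m) (Fin n) ℝ) (v : Fin n → ℝ) :
    mCLM M (eV v) = eV (M *ᵥ v) :=
  toEuclideanLin_apply_piLp_toLp M v

lemma norm_mCLM_apply (M : Matrix (Fin m) (Fin n) ℝ) (v : Fin n → ℝ) :
    ‖mCLM M (eV v)‖ = Real.sqrt (∑ i, (∑ j, M i j * v j) ^ 2) := by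
  rw [mCLM_apply, norm_eV]
  simp [Matrix.mulVec, dotProduct]

lemma opN_eq (M : Matrix (Fin m) (Fin n) ℝ) : opN M = ‖M‖ := by
  rw [norm_mCLM, ← (mCLM M).sSup_unitClosedBall_eq_norm]
  unfold opN
  congr 1
  ext x
  constructor
  · rintro ⟨v, hv, rfl⟩
    exact ⟨eV v, by rwa [Metric.mem_closedBall, dist_zero_right, norm_eV],
      norm_mCLM_apply M v⟩
  · rintro ⟨y, hy, rfl⟩
    refine ⟨WithLp.equiv 2 _ y, ?_, ?_⟩
    · rw [← norm_eV]
      simpa [eV] using Metric.mem_closedBall.mp hy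
    · exact norm_mCLM_apply M ((WithLp.equiv 2 _) y)


lemma sminv_eq' (Φ : Matrix (Fin m) (Fin k) ℝ) :
    sminv Φ = sInf {x | ∃ v : Fin k → ℝ, ‖eV v‖ = 1 ∧ x = ‖mCLM Φ (eV v)‖} := by
  unfold sminv
  congr 1
  ext x
  simp only [norm_eV, norm_mCLM_apply]

lemma bddBelow_sminv (Φ : Matrix (Fin m) (Fin k) ℝ) :
    BddBelow {x | ∃ v : Fin k → ℝ, ‖eV v‖ = 1 ∧ x = ‖mCLM Φ (eV v)‖} :=
  ⟨0, by rintro x ⟨v, -, rfl⟩; positivity⟩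

lemma eV_zero : eV (0 : Fin n → ℝ) = 0 := rfl

lemma eV_smul (c : ℝ) (v : Fin n → ℝ) : eV (c • v) = c • eV v := rfl

lemma sminv_coercive (Φ : Matrix (Fin m) (Fin k) ℝ) (v : Fin k → ℝ) :
    sminv Φ * ‖eV v‖ ≤ ‖mCLM Φ (eV v)‖ := by
  rcases eq_or_ne v 0 with rfl | hv
  · simp [eV_zero]
  · have hnv : (0:ℝ) < ‖eV v‖ := by
      rw [norm_pos_iff]
      exact fun h => hv (by simpa [eV] using congrArg (WithLp.equiv 2 _) h)
    have h1 : sminv Φ ≤ ‖mCLM Φ (eV (‖eV v‖⁻¹ • v))‖ := by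
      rw [sminv_eq']
      refine csInf_le (bddBelow_sminv Φ) ⟨_, ?_, rfl⟩
      rw [eV_smul, norm_smul, Real.norm_eq_abs, abs_of_pos (inv_pos.mpr hnv),
        inv_mul_cancel₀ hnv.ne']
    have h2 : ‖mCLM Φ (eV (‖eV v‖⁻¹ • v))‖ = ‖eV v‖⁻¹ * ‖mCLM Φ (eV v)‖ := by
      rw [eV_smul, _root_.map_smul, norm_smul, Real.norm_eq_abs, abs_of_pos (inv_pos.mpr hnv)]
    rw [h2] at h1
    calc sminv Φ * ‖eV v‖ ≤ (‖eV v‖⁻¹ * ‖mCLM Φ (eV v)‖) * ‖eV v‖ :=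
          mul_le_mul_of_nonneg_right h1 hnv.le
    _ = ‖mCLM Φ (eV v)‖ := by field_simp

lemma dot_le (v w : Fin n → ℝ) : v ⬝ᵥ w ≤ ‖eV v‖ * ‖eV w‖ := by
  have h := real_inner_le_norm (eV v) (eV w)
  have heq : (inner ℝ (eV v) (eV w) : ℝ) = v ⬝ᵥ w := by
    simp [PiLp.inner_apply, eV, dotProduct, RCLike.inner_apply, starRingEnd_apply]
    exact Finset.sum_congr rfl fun i _ => mul_comm _ _
  linarith

lemma dot_gram (A : Matrix (Fin m) (Fin k) ℝ) (v : Fin k → ℝ) :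
    v ⬝ᵥ ((Aᵀ * A) *ᵥ v) = ‖mCLM A (eV v)‖ ^ 2 := by
  rw [mCLM_apply]
  have h : ‖eV (A *ᵥ v)‖ ^ 2 = (A *ᵥ v) ⬝ᵥ (A *ᵥ v) := by
    rw [norm_eV, Real.sq_sqrt (by positivity)]
    simp [dotProduct, sq]
  rw [h, ← Matrix.mulVec_mulVec, Matrix.dotProduct_mulVec, Matrix.vecMul_transpose]

lemma coercive_of_quad (A : Matrix (Fin k) (Fin k) ℝ) (c : ℝ) (hc : 0 ≤ c)
    (h : ∀ v : Fin k → ℝ, c * ‖eV v‖ ^ 2 ≤ v ⬝ᵥ (A *ᵥ v)) (v : Fin k → ℝ) :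
    c * ‖eV v‖ ≤ ‖eV (A *ᵥ v)‖ := by
  rcases (norm_nonneg (eV v)).eq_or_lt with h0 | h0
  · rw [← h0, mul_zero]
    positivity
  · have h1 := h v
    have h2 : v ⬝ᵥ (A *ᵥ v) ≤ ‖eV v‖ * ‖eV (A *ᵥ v)‖ := dot_le _ _
    nlinarith [h0, h1, h2]

lemma inv_bound (A : Matrix (Fin k) (Fin k) ℝ) (c : ℝ) (hc : 0 < c)
    (hA : ∀ v : Fin k → ℝ, c * ‖eV v‖ ≤ ‖eV (A *ᵥ v)‖) :
    IsUnit A ∧ ‖A⁻¹‖ ≤ 1 / c := by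
  have hinj : Function.Injective A.mulVec := by
    intro x y hxy
    have h := hA (x - y)
    rw [Matrix.mulVec_sub, hxy, sub_self, eV_zero, norm_zero] at h
    have h0 : ‖eV (x - y)‖ = 0 := le_antisymm (by nlinarith [norm_nonneg (eV (x - y))])
      (norm_nonneg _)
    have h1 : eV (x - y) = 0 := norm_eq_zero.mp h0
    have h2 : x - y = 0 := by simpa [eV] using congrArg (WithLp.equiv 2 _) h1
    exact sub_eq_zero.mp h2
  have hu : IsUnit A := Matrix.mulVec_injective_iff_isUnit.mp hinj
  have hdet : IsUnit A.det := (Matrix.isUnit_iff_isUnit_det A).mp hu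
  refine ⟨hu, ?_⟩
  rw [norm_mCLM]
  refine ContinuousLinearMap.opNorm_le_bound _ (by positivity) fun y => ?_
  set w : Fin k → ℝ := (WithLp.equiv 2 _) y with hw
  show ‖mCLM A⁻¹ (eV w)‖ ≤ 1 / c * ‖eV w‖
  rw [mCLM_apply]
  have h := hA (A⁻¹ *ᵥ w)
  rw [Matrix.mulVec_mulVec, Matrix.mul_nonsing_inv A hdet, Matrix.one_mulVec] at h
  calc ‖eV (A⁻¹ *ᵥ w)‖ = (c * ‖eV (A⁻¹ *ᵥ w)‖) / c := by field_simp
    _ ≤ ‖eV w‖ / c := by gcongr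
    _ = 1 / c * ‖eV w‖ := by ring

lemma normT (M : Matrix (Fin m) (Fin n) ℝ) : ‖Mᵀ‖ = ‖M‖ := by
  have h : Mᴴ = Mᵀ := by ext i j; simp [Matrix.conjTranspose_apply]
  rw [← h, Matrix.l2_opNorm_conjTranspose]

lemma mCLM_add (M N : Matrix (Fin m) (Fin n) ℝ) : mCLM (M + N) = mCLM M + mCLM N :=
  map_add _ M N

lemma norm_mCLM_le (M : Matrix (Fin m) (Fin n) ℝ) (x : EuclideanSpace ℝ (Fin n)) :
    ‖mCLM M x‖ ≤ ‖M‖ * ‖x‖ := by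
  rw [norm_mCLM]
  exact (mCLM M).le_opNorm x

end Stmt15Aux

open Stmt15Aux in
/-- Perturbation bound for the Moore–Penrose pseudo-inverse of a
full-column-rank matrix. -/
theorem stmt15 {m k : ℕ} (Φ E Φtil : Matrix (Fin m) (Fin k) ℝ)
    (hrank : Φ.rank = k) (hsmin : 0 < sminv Φ)
    (hΦtil : Φtil = Φ + E)
    (D : ℝ) (hD : D = 2 * opN E * opN Φ + (opN E) ^ 2)
    (hDlt : D < (sminv Φ) ^ 2) :
    IsUnit (Φtilᵀ * Φtil) ∧
    opN ((Φtilᵀ * Φtil)⁻¹ * Φtilᵀ - (Φᵀ * Φ)⁻¹ * Φᵀ) ≤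
      opN E / (sminv Φ) ^ 2 +
      ((D / (sminv Φ) ^ 4) / (1 - D / (sminv Φ) ^ 2)) * (opN Φ + opN E) := by
  subst hΦtil
  set σ := sminv Φ with hσ
  have hDdef : D = 2 * ‖E‖ * ‖Φ‖ + ‖E‖ ^ 2 := by rw [hD, opN_eq, opN_eq]
  have hDnn : (0:ℝ) ≤ D := by rw [hDdef]; positivity
  have hσ2 : (0:ℝ) < σ ^ 2 := by positivity
  have hσD : (0:ℝ) < σ ^ 2 - D := sub_pos.mpr hDlt
  -- coercivity of the Gram matrix of Φ
  have hquadA : ∀ v : Fin k → ℝ, σ ^ 2 * ‖eV v‖ ^ 2 ≤ v ⬝ᵥ ((Φᵀ * Φ) *ᵥ v) := by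
    intro v
    rw [dot_gram]
    have h1 := sminv_coercive Φ v
    rw [← hσ] at h1
    have h2 : (σ * ‖eV v‖) ^ 2 ≤ ‖mCLM Φ (eV v)‖ ^ 2 :=
      pow_le_pow_left₀ (by positivity) h1 2
    nlinarith [h2]
  obtain ⟨huA, hinvA⟩ := inv_bound (Φᵀ * Φ) (σ ^ 2) hσ2 (coercive_of_quad _ _ hσ2.le hquadA)
  -- coercivity of the Gram matrix of Φ + E
  have hquadB : ∀ v : Fin k → ℝ,
      (σ ^ 2 - D) * ‖eV v‖ ^ 2 ≤ v ⬝ᵥ (((Φ + E)ᵀ * (Φ + E)) *ᵥ v) := by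
    intro v
    rw [dot_gram]
    set x := eV v with hx
    have hsum : mCLM (Φ + E) x = mCLM Φ x + mCLM E x := by rw [mCLM_add]; rfl
    have hplus : ‖mCLM (Φ + E) x‖ ^ 2 =
        ‖mCLM Φ x‖ ^ 2 + 2 * (inner ℝ (mCLM Φ x) (mCLM E x) : ℝ) + ‖mCLM E x‖ ^ 2 := by
      rw [hsum]; exact norm_add_sq_real _ _
    have hinner := abs_real_inner_le_norm (mCLM Φ x) (mCLM E x)
    have ha1 : σ * ‖x‖ ≤ ‖mCLM Φ x‖ := sminv_coercive Φ v
    have ha2 : ‖mCLM Φ x‖ ≤ ‖Φ‖ * ‖x‖ := norm_mCLM_le Φ x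
    have hb : ‖mCLM E x‖ ≤ ‖E‖ * ‖x‖ := norm_mCLM_le E x
    have hab : ‖mCLM Φ x‖ * ‖mCLM E x‖ ≤ (‖Φ‖ * ‖x‖) * (‖E‖ * ‖x‖) :=
      mul_le_mul ha2 hb (norm_nonneg _) (by positivity)
    have ha1sq : (σ * ‖x‖) ^ 2 ≤ ‖mCLM Φ x‖ ^ 2 :=
      pow_le_pow_left₀ (by positivity) ha1 2
    have habs := abs_le.mp hinner
    rw [hplus]
    rw [hDdef]
    nlinarith [sq_nonneg (‖E‖ * ‖x‖), sq_nonneg ‖x‖, norm_nonneg x]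
  obtain ⟨huB, hinvB⟩ := inv_bound ((Φ + E)ᵀ * (Φ + E)) (σ ^ 2 - D) hσD
    (coercive_of_quad _ _ hσD.le hquadB)
  refine ⟨huB, ?_⟩
  have hdA : IsUnit (Φᵀ * Φ).det := (Matrix.isUnit_iff_isUnit_det _).mp huA
  have hdB : IsUnit ((Φ + E)ᵀ * (Φ + E)).det := (Matrix.isUnit_iff_isUnit_det _).mp huB
  set A := Φᵀ * Φ with hA
  set B := (Φ + E)ᵀ * (Φ + E) with hB
  -- norm of A - B
  have hΔ : ‖A - B‖ ≤ D := by
    have hBexp : B = A + (Φᵀ * E + Eᵀ * Φ + Eᵀ * E) := by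
      rw [hB, hA, Matrix.transpose_add, Matrix.add_mul, Matrix.mul_add, Matrix.mul_add]
      abel
    have hneg : A - B = -(Φᵀ * E + Eᵀ * Φ + Eᵀ * E) := by rw [hBexp]; abel
    rw [hneg, norm_neg]
    have t1 : ‖Φᵀ * E‖ ≤ ‖Φ‖ * ‖E‖ := by
      have h := Matrix.l2_opNorm_mul Φᵀ E
      rwa [normT] at h
    have t2 : ‖Eᵀ * Φ‖ ≤ ‖E‖ * ‖Φ‖ := by
      have h := Matrix.l2_opNorm_mul Eᵀ Φ
      rwa [normT] at h
    have t3 : ‖Eᵀ * E‖ ≤ ‖E‖ * ‖E‖ := by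
      have h := Matrix.l2_opNorm_mul Eᵀ E
      rwa [normT] at h
    calc ‖Φᵀ * E + Eᵀ * Φ + Eᵀ * E‖ ≤ ‖Φᵀ * E + Eᵀ * Φ‖ + ‖Eᵀ * E‖ := norm_add_le _ _
      _ ≤ ‖Φᵀ * E‖ + ‖Eᵀ * Φ‖ + ‖Eᵀ * E‖ :=
          add_le_add_left (norm_add_le _ _) _
      _ ≤ ‖Φ‖ * ‖E‖ + ‖E‖ * ‖Φ‖ + ‖E‖ * ‖E‖ := by gcongr
      _ = D := by rw [hDdef]; ring
  -- key algebraic identity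
  have hdiff : B⁻¹ * A * A⁻¹ - B⁻¹ * B * A⁻¹ = B⁻¹ - A⁻¹ := by
    rw [Matrix.mul_assoc, Matrix.mul_nonsing_inv A hdA, Matrix.mul_one,
      Matrix.nonsing_inv_mul B hdB, Matrix.one_mul]
  have h1 : B⁻¹ * (A - B) * A⁻¹ = B⁻¹ - A⁻¹ := by
    rw [Matrix.mul_sub, Matrix.sub_mul, hdiff]
  have key : B⁻¹ * (Φ + E)ᵀ - A⁻¹ * Φᵀ =
      A⁻¹ * Eᵀ + (B⁻¹ * (A - B) * A⁻¹) * (Φ + E)ᵀ := by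
    rw [h1, Matrix.transpose_add]
    simp only [Matrix.mul_add, Matrix.sub_mul]
    abel
  -- norm bounds
  have n1 : ‖A⁻¹ * Eᵀ‖ ≤ 1 / σ ^ 2 * ‖E‖ := by
    calc ‖A⁻¹ * Eᵀ‖ ≤ ‖A⁻¹‖ * ‖Eᵀ‖ := Matrix.l2_opNorm_mul _ _
      _ ≤ 1 / σ ^ 2 * ‖E‖ := by
          rw [normT]
          exact mul_le_mul_of_nonneg_right hinvA (norm_nonneg _)
  have n2 : ‖(B⁻¹ * (A - B) * A⁻¹) * (Φ + E)ᵀ‖ ≤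
      1 / (σ ^ 2 - D) * D * (1 / σ ^ 2) * (‖Φ‖ + ‖E‖) := by
    have f4 : ‖(Φ + E)ᵀ‖ ≤ ‖Φ‖ + ‖E‖ := by
      rw [normT]; exact norm_add_le _ _
    calc ‖(B⁻¹ * (A - B) * A⁻¹) * (Φ + E)ᵀ‖
        ≤ ‖B⁻¹ * (A - B) * A⁻¹‖ * ‖(Φ + E)ᵀ‖ := Matrix.l2_opNorm_mul _ _
      _ ≤ (‖B⁻¹ * (A - B)‖ * ‖A⁻¹‖) * ‖(Φ + E)ᵀ‖ :=
          mul_le_mul_of_nonneg_right (Matrix.l2_opNorm_mul _ _) (norm_nonneg _)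
      _ ≤ ((‖B⁻¹‖ * ‖A - B‖) * ‖A⁻¹‖) * ‖(Φ + E)ᵀ‖ := by
          have := Matrix.l2_opNorm_mul B⁻¹ (A - B)
          gcongr
      _ ≤ ((1 / (σ ^ 2 - D)) * D * (1 / σ ^ 2)) * (‖Φ‖ + ‖E‖) := by
          gcongr <;> first | exact hinvB | exact hΔ | exact hinvA | exact f4 | positivity
      _ = 1 / (σ ^ 2 - D) * D * (1 / σ ^ 2) * (‖Φ‖ + ‖E‖) := by ring
  simp only [opN_eq]
  calc ‖B⁻¹ * (Φ + E)ᵀ - A⁻¹ * Φᵀ‖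
      ≤ ‖A⁻¹ * Eᵀ‖ + ‖(B⁻¹ * (A - B) * A⁻¹) * (Φ + E)ᵀ‖ := by
        rw [key]; exact norm_add_le _ _
    _ ≤ 1 / σ ^ 2 * ‖E‖ + 1 / (σ ^ 2 - D) * D * (1 / σ ^ 2) * (‖Φ‖ + ‖E‖) :=
        add_le_add n1 n2
    _ = ‖E‖ / σ ^ 2 + ((D / σ ^ 4) / (1 - D / σ ^ 2)) * (‖Φ‖ + ‖E‖) := by
        have hσ0 : σ ≠ 0 := hsmin.ne'
        have hσD0 : σ ^ 2 - D ≠ 0 := hσD.ne'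
        have h1md : 1 - D / σ ^ 2 ≠ 0 := by
          rw [sub_ne_zero]
          intro h
          apply hσD0
          field_simp at h
          rw [h]; ring
        field_simp
end

section
/- Let Φ ∈ ℝ^{m×k} have full column rank, let E ∈ ℝ^{m×k}, set Φ̃ = Φ + E and D = 2‖E‖₂‖Φ‖₂ + ‖E‖₂², and assume D < σ_min(Φ)². Let a* ∈ ℝ^k and define ã = (Φ̃ᵀΦ̃)⁻¹Φ̃ᵀ·(Φ a*), the least-squares solution for the perturbed matrix applied to the unperturbed observations. Then ‖ã − a*‖₂ ≤ (‖E‖₂ / σ_min(Φ))·‖a*‖₂ + (‖E‖₂² / σ_min(Φ)²)·‖a*‖₂ + (‖E‖₂·D / σ_min(Φ)⁴) / (1 − D / σ_min(Φ)²)·(‖Φ‖₂ + ‖E‖₂)·‖a*‖₂. -/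
open Matrix

noncomputable abbrev eu {n : ℕ} (v : Fin n → ℝ) : EuclideanSpace ℝ (Fin n) := WithLp.toLp 2 v

lemma euNorm {n : ℕ} (v : Fin n → ℝ) : Real.sqrt (∑ j, v j ^ 2) = ‖eu v‖ := by
  rw [EuclideanSpace.norm_eq]
  congr 1; exact Finset.sum_congr rfl fun j _ => by simp [Real.norm_eq_abs, sq_abs]

lemma dot_le {n : ℕ} (u v : Fin n → ℝ) : u ⬝ᵥ v ≤ ‖eu u‖ * ‖eu v‖ := by
  have := abs_real_inner_le_norm (eu u) (eu v)
  have h2 : inner ℝ (eu u) (eu v) = u ⬝ᵥ v := by simp [PiLp.inner_apply, dotProduct, mul_comm]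
  rw [h2] at this
  exact (le_abs_self _).trans this

lemma dot_self_eq {n : ℕ} (v : Fin n → ℝ) : v ⬝ᵥ v = ‖eu v‖ ^ 2 := by
  have := real_inner_self_eq_norm_sq (eu v)
  rw [← euNorm, Real.sq_sqrt (by positivity)]; simp [dotProduct, sq]

lemma mulVec_sqrt {m n : ℕ} (M : Matrix (Fin m) (Fin n) ℝ) (v : Fin n → ℝ) :
    Real.sqrt (∑ i, (∑ j, M i j * v j) ^ 2) = ‖eu (M.mulVec v)‖ := by
  rw [← euNorm]; rfl

lemma opN_bddAbove {m n : ℕ} (M : Matrix (Fin m) (Fin n) ℝ) :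
    BddAbove {x | ∃ v : Fin n → ℝ, Real.sqrt (∑ j, v j ^ 2) ≤ 1 ∧
      x = Real.sqrt (∑ i, (∑ j, M i j * v j) ^ 2)} := by
  refine ⟨Real.sqrt (∑ i, ∑ j, M i j ^ 2), ?_⟩
  rintro x ⟨v, hv, rfl⟩
  rw [euNorm] at hv
  refine Real.sqrt_le_sqrt (Finset.sum_le_sum fun i _ => ?_)
  have h1 : (∑ j, M i j * v j) = (fun j => M i j) ⬝ᵥ v := rfl
  have h3 : (∑ j, M i j * v j)^2 ≤ (‖eu (fun j => M i j)‖ * ‖eu v‖)^2 := by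
    rw [h1]
    have := abs_real_inner_le_norm (eu (fun j => M i j)) (eu v)
    have hh : inner ℝ (eu (fun j => M i j)) (eu v) = (fun j => M i j) ⬝ᵥ v := by
      simp [PiLp.inner_apply, dotProduct, mul_comm]
    rw [hh] at this
    calc ((fun j => M i j) ⬝ᵥ v)^2 = |(fun j => M i j) ⬝ᵥ v|^2 := (sq_abs _).symm
      _ ≤ _ := by apply pow_le_pow_left₀ (abs_nonneg _) this
  refine h3.trans ?_
  have h4 : ‖eu (fun j => M i j)‖^2 = ∑ j, M i j ^ 2 := by
    rw [← euNorm, Real.sq_sqrt]; positivity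
  calc (‖eu (fun j => M i j)‖ * ‖eu v‖)^2 = ‖eu (fun j => M i j)‖^2 * ‖eu v‖^2 := by ring
    _ ≤ ‖eu (fun j => M i j)‖^2 * 1 := by
        apply mul_le_mul_of_nonneg_left _ (by positivity)
        nlinarith [norm_nonneg (eu v)]
    _ = ∑ j, M i j ^ 2 := by rw [mul_one, h4]

lemma opN_nonneg {m n : ℕ} (M : Matrix (Fin m) (Fin n) ℝ) : 0 ≤ opN M := by
  apply le_csSup (opN_bddAbove M)
  exact ⟨0, by simp⟩

lemma eu_norm_zero {n : ℕ} : ‖eu (0 : Fin n → ℝ)‖ = 0 := by rw [← euNorm]; simp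

lemma opN_mulVec_le {m n : ℕ} (M : Matrix (Fin m) (Fin n) ℝ) (v : Fin n → ℝ) :
    ‖eu (M.mulVec v)‖ ≤ opN M * ‖eu v‖ := by
  rcases eq_or_ne v 0 with rfl | hv
  · rw [Matrix.mulVec_zero, eu_norm_zero, eu_norm_zero, mul_zero]
  · have hc : 0 < ‖eu v‖ := by
      rw [← euNorm]
      have : 0 ≤ ∑ j, v j ^ 2 := by positivity
      rcases this.lt_or_eq with h | h
      · exact Real.sqrt_pos.mpr h
      · exfalso; apply hv; funext j
        have := (Finset.sum_eq_zero_iff_of_nonneg (fun j _ => sq_nonneg (v j))).mp h.symm j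
          (Finset.mem_univ j)
        exact pow_eq_zero_iff (n := 2) (by norm_num) |>.mp this
    set c := ‖eu v‖ with hcdef
    have hmem : ‖eu (M.mulVec (c⁻¹ • v))‖ ∈ {x | ∃ u : Fin n → ℝ,
        Real.sqrt (∑ j, u j ^ 2) ≤ 1 ∧ x = Real.sqrt (∑ i, (∑ j, M i j * u j) ^ 2)} := by
      refine ⟨c⁻¹ • v, ?_, (mulVec_sqrt M _).symm⟩
      rw [euNorm]
      have : eu (c⁻¹ • v) = c⁻¹ • eu v := rfl
      rw [this, norm_smul]
      rw [Real.norm_eq_abs, abs_inv, abs_of_pos hc, inv_mul_cancel₀ hc.ne']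
    have hle := le_csSup (opN_bddAbove M) hmem
    have hsmul : M.mulVec v = c • M.mulVec (c⁻¹ • v) := by
      rw [Matrix.mulVec_smul, smul_smul, mul_inv_cancel₀ hc.ne', one_smul]
    have : ‖eu (M.mulVec v)‖ = c * ‖eu (M.mulVec (c⁻¹ • v))‖ := by
      rw [hsmul]
      have h2 : eu (c • M.mulVec (c⁻¹ • v)) = c • eu (M.mulVec (c⁻¹ • v)) := rfl
      rw [h2, norm_smul, Real.norm_eq_abs, abs_of_pos hc]
    rw [this, mul_comm (opN M) c]
    exact mul_le_mul_of_nonneg_left hle hc.le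

lemma sminv_mulVec_le {m n : ℕ} (M : Matrix (Fin m) (Fin n) ℝ) (v : Fin n → ℝ) :
    sminv M * ‖eu v‖ ≤ ‖eu (M.mulVec v)‖ := by
  rcases eq_or_ne v 0 with rfl | hv
  · rw [Matrix.mulVec_zero, eu_norm_zero, eu_norm_zero, mul_zero]
  · have hc : 0 < ‖eu v‖ := by
      rw [← euNorm]
      have : 0 ≤ ∑ j, v j ^ 2 := by positivity
      rcases this.lt_or_eq with h | h
      · exact Real.sqrt_pos.mpr h
      · exfalso; apply hv; funext j
        have := (Finset.sum_eq_zero_iff_of_nonneg (fun j _ => sq_nonneg (v j))).mp h.symm j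
          (Finset.mem_univ j)
        exact pow_eq_zero_iff (n := 2) (by norm_num) |>.mp this
    set c := ‖eu v‖ with hcdef
    have hbdd : BddBelow {x | ∃ u : Fin n → ℝ, Real.sqrt (∑ j, u j ^ 2) = 1 ∧
        x = Real.sqrt (∑ i, (∑ j, M i j * u j) ^ 2)} := by
      refine ⟨0, ?_⟩; rintro x ⟨u, _, rfl⟩; positivity
    have hmem : ‖eu (M.mulVec (c⁻¹ • v))‖ ∈ {x | ∃ u : Fin n → ℝ,
        Real.sqrt (∑ j, u j ^ 2) = 1 ∧ x = Real.sqrt (∑ i, (∑ j, M i j * u j) ^ 2)} := by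
      refine ⟨c⁻¹ • v, ?_, (mulVec_sqrt M _).symm⟩
      rw [euNorm]
      have : eu (c⁻¹ • v) = c⁻¹ • eu v := rfl
      rw [this, norm_smul]
      rw [Real.norm_eq_abs, abs_inv, abs_of_pos hc, inv_mul_cancel₀ hc.ne']
    have hle := csInf_le hbdd hmem
    have hsmul : M.mulVec v = c • M.mulVec (c⁻¹ • v) := by
      rw [Matrix.mulVec_smul, smul_smul, mul_inv_cancel₀ hc.ne', one_smul]
    have heq : ‖eu (M.mulVec v)‖ = c * ‖eu (M.mulVec (c⁻¹ • v))‖ := by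
      rw [hsmul]
      have h2 : eu (c • M.mulVec (c⁻¹ • v)) = c • eu (M.mulVec (c⁻¹ • v)) := rfl
      rw [h2, norm_smul, Real.norm_eq_abs, abs_of_pos hc]
    rw [heq, mul_comm (sminv M) c]
    exact mul_le_mul_of_nonneg_left hle hc.le

lemma dot_mulVec_comm {m n : ℕ} (M : Matrix (Fin m) (Fin n) ℝ) (u : Fin n → ℝ) (w : Fin m → ℝ) :
    u ⬝ᵥ Mᵀ.mulVec w = (M.mulVec u) ⬝ᵥ w := by
  rw [Matrix.dotProduct_mulVec, Matrix.vecMul_transpose]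

lemma gram_dot {m n : ℕ} (A : Matrix (Fin m) (Fin n) ℝ) (v : Fin n → ℝ) :
    v ⬝ᵥ (Aᵀ * A).mulVec v = ‖eu (A.mulVec v)‖ ^ 2 := by
  rw [← Matrix.mulVec_mulVec, dot_mulVec_comm, dot_self_eq]

lemma opN_transpose_mulVec_le {m n : ℕ} (M : Matrix (Fin m) (Fin n) ℝ) (w : Fin m → ℝ) :
    ‖eu (Mᵀ.mulVec w)‖ ≤ opN M * ‖eu w‖ := by
  set u := Mᵀ.mulVec w with hu
  have h1 : ‖eu u‖ ^ 2 = (M.mulVec u) ⬝ᵥ w := by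
    rw [← dot_self_eq]
    conv_lhs => rw [hu, dot_mulVec_comm]
  have h2 : (M.mulVec u) ⬝ᵥ w ≤ ‖eu (M.mulVec u)‖ * ‖eu w‖ := dot_le _ _
  have h3 := opN_mulVec_le M u
  rcases eq_or_lt_of_le (norm_nonneg (eu u)) with h0 | h0
  · rw [← h0]; exact mul_nonneg (opN_nonneg M) (norm_nonneg _)
  · have h4 : ‖eu u‖ ^ 2 ≤ (opN M * ‖eu u‖) * ‖eu w‖ := by
      rw [h1]
      exact h2.trans (mul_le_mul_of_nonneg_right h3 (norm_nonneg _))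
    nlinarith

lemma coercive_isUnit {n : ℕ} (A : Matrix (Fin n) (Fin n) ℝ) (c : ℝ) (hc : 0 < c)
    (h : ∀ v : Fin n → ℝ, c * ‖eu v‖ ^ 2 ≤ v ⬝ᵥ A.mulVec v) : IsUnit A.det := by
  apply (Matrix.isUnit_iff_isUnit_det A).mp
  apply Matrix.mulVec_injective_iff_isUnit.mp
  intro x y hxy
  have hz : A.mulVec (x - y) = 0 := by rw [Matrix.mulVec_sub, hxy, sub_self]
  have h1 := h (x - y)
  rw [hz, dotProduct_zero] at h1
  have hsq : ‖eu (x - y)‖ ^ 2 ≤ 0 :=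
    le_of_mul_le_mul_left (by linarith : c * ‖eu (x - y)‖ ^ 2 ≤ c * 0) hc
  have hn : ‖eu (x - y)‖ = 0 := by nlinarith [sq_nonneg ‖eu (x - y)‖, norm_nonneg (eu (x - y))]
  have h2 : eu (x - y) = 0 := norm_eq_zero.mp hn
  have h3 : x - y = 0 := congrArg WithLp.ofLp h2
  exact sub_eq_zero.mp h3

lemma coercive_inv_bound {n : ℕ} (A : Matrix (Fin n) (Fin n) ℝ) (c : ℝ) (hc : 0 < c)
    (h : ∀ v : Fin n → ℝ, c * ‖eu v‖ ^ 2 ≤ v ⬝ᵥ A.mulVec v) (x : Fin n → ℝ) :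
    ‖eu (A⁻¹.mulVec x)‖ ≤ ‖eu x‖ / c := by
  have hdet := coercive_isUnit A c hc h
  set y := A⁻¹.mulVec x with hy
  have hAy : A.mulVec y = x := by
    rw [hy, Matrix.mulVec_mulVec, A.mul_nonsing_inv hdet, Matrix.one_mulVec]
  have h1 : c * ‖eu y‖ ^ 2 ≤ y ⬝ᵥ x := by
    have := h y; rwa [hAy] at this
  have h2 : y ⬝ᵥ x ≤ ‖eu y‖ * ‖eu x‖ := dot_le y x
  rcases eq_or_lt_of_le (norm_nonneg (eu y)) with h0 | h0
  · rw [← h0]; positivity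
  · rw [le_div_iff₀ hc]; nlinarith

lemma pinv_bound {m n : ℕ} (Φ : Matrix (Fin m) (Fin n) ℝ) (σ : ℝ) (hσ : 0 < σ)
    (hs : ∀ v : Fin n → ℝ, σ * ‖eu v‖ ≤ ‖eu (Φ.mulVec v)‖) (x : Fin m → ℝ) :
    ‖eu ((Φᵀ * Φ)⁻¹.mulVec (Φᵀ.mulVec x))‖ ≤ ‖eu x‖ / σ := by
  have hco : ∀ v : Fin n → ℝ, σ ^ 2 * ‖eu v‖ ^ 2 ≤ v ⬝ᵥ (Φᵀ * Φ).mulVec v := by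
    intro v
    rw [gram_dot]
    have h0 := hs v
    nlinarith [mul_le_mul h0 h0 (mul_nonneg hσ.le (norm_nonneg (eu v))) (norm_nonneg (eu (Φ.mulVec v)))]
  have hdet := coercive_isUnit _ _ (by positivity) hco
  set y := (Φᵀ * Φ)⁻¹.mulVec (Φᵀ.mulVec x) with hy
  have hGy : (Φᵀ * Φ).mulVec y = Φᵀ.mulVec x := by
    rw [hy, Matrix.mulVec_mulVec, Matrix.mul_nonsing_inv _ hdet, Matrix.one_mulVec]
  have h1 : ‖eu (Φ.mulVec y)‖ ^ 2 = (Φ.mulVec y) ⬝ᵥ x := by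
    rw [← dot_self_eq]
    calc (Φ.mulVec y) ⬝ᵥ (Φ.mulVec y) = y ⬝ᵥ Φᵀ.mulVec (Φ.mulVec y) :=
          (dot_mulVec_comm Φ y (Φ.mulVec y)).symm
      _ = y ⬝ᵥ (Φᵀ * Φ).mulVec y := by rw [Matrix.mulVec_mulVec]
      _ = y ⬝ᵥ Φᵀ.mulVec x := by rw [hGy]
      _ = (Φ.mulVec y) ⬝ᵥ x := dot_mulVec_comm Φ y x
  have h2 : (Φ.mulVec y) ⬝ᵥ x ≤ ‖eu (Φ.mulVec y)‖ * ‖eu x‖ := dot_le _ _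
  have h3 : ‖eu (Φ.mulVec y)‖ ≤ ‖eu x‖ := by
    nlinarith [norm_nonneg (eu (Φ.mulVec y)), norm_nonneg (eu x)]
  have h4 := hs y
  rw [le_div_iff₀ hσ]
  calc ‖eu y‖ * σ = σ * ‖eu y‖ := by ring
    _ ≤ ‖eu (Φ.mulVec y)‖ := h4
    _ ≤ ‖eu x‖ := h3
set_option maxHeartbeats 2000000 in
/-- Perturbation bound for the least-squares solution
`ã = Φ̃† (Φ a*)` under a perturbation `E` of `Φ`. -/
theorem stmt16 {m k : ℕ} (Φ E Φtil : Matrix (Fin m) (Fin k) ℝ)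
    (hrank : Φ.rank = k) (hsmin : 0 < sminv Φ)
    (hΦtil : Φtil = Φ + E)
    (D : ℝ) (hD : D = 2 * opN E * opN Φ + (opN E) ^ 2)
    (hDlt : D < (sminv Φ) ^ 2)
    (aStar atil : Fin k → ℝ)
    (hatil : atil = ((Φtilᵀ * Φtil)⁻¹ * Φtilᵀ).mulVec (Φ.mulVec aStar)) :
    Real.sqrt (∑ j, (atil j - aStar j) ^ 2) ≤
      (opN E / sminv Φ) * Real.sqrt (∑ j, (aStar j) ^ 2) +
      ((opN E) ^ 2 / (sminv Φ) ^ 2) * Real.sqrt (∑ j, (aStar j) ^ 2) +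
      ((opN E * D / (sminv Φ) ^ 4) / (1 - D / (sminv Φ) ^ 2)) *
        (opN Φ + opN E) * Real.sqrt (∑ j, (aStar j) ^ 2) := by
  have e0 := opN_nonneg E
  have p0 := opN_nonneg Φ
  set σ := sminv Φ with hσdef
  set e := opN E with hedef
  set p := opN Φ with hpdef
  have hD0 : 0 ≤ D := by rw [hD]; positivity
  have hσ2 : 0 < σ ^ 2 := by positivity
  have hσD : 0 < σ ^ 2 - D := by linarith
  have hsΦ : ∀ v : Fin k → ℝ, σ * ‖eu v‖ ≤ ‖eu (Φ.mulVec v)‖ := fun v => sminv_mulVec_le Φ v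
  have hcoG : ∀ v : Fin k → ℝ, σ ^ 2 * ‖eu v‖ ^ 2 ≤ v ⬝ᵥ (Φᵀ * Φ).mulVec v := by
    intro v
    rw [gram_dot]
    have h0 := hsΦ v
    nlinarith [mul_le_mul h0 h0 (mul_nonneg hsmin.le (norm_nonneg (eu v)))
      (norm_nonneg (eu (Φ.mulVec v)))]
  have hdetG : IsUnit (Φᵀ * Φ).det := coercive_isUnit _ _ hσ2 hcoG
  have hcoGt : ∀ v : Fin k → ℝ, (σ ^ 2 - D) * ‖eu v‖ ^ 2 ≤ v ⬝ᵥ (Φtilᵀ * Φtil).mulVec v := by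
    intro v
    rw [gram_dot]
    have hexp : eu (Φtil.mulVec v) = eu (Φ.mulVec v) + eu (E.mulVec v) := by
      rw [hΦtil, Matrix.add_mulVec]; rfl
    have hnorm : ‖eu (Φtil.mulVec v)‖ ^ 2 = ‖eu (Φ.mulVec v)‖ ^ 2 +
        2 * (inner ℝ (eu (Φ.mulVec v)) (eu (E.mulVec v)) : ℝ) + ‖eu (E.mulVec v)‖ ^ 2 := by
      rw [hexp]; exact norm_add_sq_real _ _
    have hip : -(‖eu (Φ.mulVec v)‖ * ‖eu (E.mulVec v)‖) ≤
        (inner ℝ (eu (Φ.mulVec v)) (eu (E.mulVec v)) : ℝ) :=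
      (abs_le.mp (abs_real_inner_le_norm _ _)).1
    have hΦv := opN_mulVec_le Φ v
    have hEv := opN_mulVec_le E v
    have hsv := hsΦ v
    rw [hnorm, hD]
    nlinarith [mul_le_mul hsv hsv (mul_nonneg hsmin.le (norm_nonneg (eu v)))
        (norm_nonneg (eu (Φ.mulVec v))),
      mul_le_mul hΦv hEv (norm_nonneg (eu (E.mulVec v)))
        (mul_nonneg p0 (norm_nonneg (eu v))),
      sq_nonneg (‖eu (E.mulVec v)‖), norm_nonneg (eu v), sq_nonneg (‖eu v‖)]
  have hdetGt : IsUnit (Φtilᵀ * Φtil).det := coercive_isUnit _ _ hσD hcoGt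
  set G := Φᵀ * Φ with hG
  set Gt := Φtilᵀ * Φtil with hGt
  set w := E.mulVec aStar with hw
  set z := Φtilᵀ.mulVec w with hz
  set s := ‖eu aStar‖ with hs
  have hs0 : 0 ≤ s := norm_nonneg _
  have hstep : atil = aStar - Gt⁻¹.mulVec z := by
    rw [hatil]
    have h1 : Φtilᵀ.mulVec (Φ.mulVec aStar) = Gt.mulVec aStar - z := by
      have hΦeq : Φ = Φtil - E := by rw [hΦtil, add_sub_cancel_right]
      rw [hz, hw, Matrix.mulVec_mulVec, Matrix.mulVec_mulVec, ← Matrix.sub_mulVec, hGt]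
      congr 1
      rw [hΦeq, Matrix.mul_sub]
    rw [← Matrix.mulVec_mulVec, h1, Matrix.mulVec_sub, Matrix.mulVec_mulVec,
      Matrix.nonsing_inv_mul _ hdetGt, Matrix.one_mulVec]
  have hdec : Gt⁻¹ * ((Gt - G) * G⁻¹) = G⁻¹ - Gt⁻¹ := by
    calc Gt⁻¹ * ((Gt - G) * G⁻¹)
        = Gt⁻¹ * (Gt * G⁻¹) - Gt⁻¹ * (G * G⁻¹) := by
          rw [Matrix.sub_mul, Matrix.mul_sub]
      _ = G⁻¹ - Gt⁻¹ := by
          rw [← Matrix.mul_assoc, Matrix.nonsing_inv_mul _ hdetGt, Matrix.one_mul,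
            Matrix.mul_nonsing_inv _ hdetG, Matrix.mul_one]
  set t1 := G⁻¹.mulVec (Φᵀ.mulVec w) with ht1
  set t2 := G⁻¹.mulVec (Eᵀ.mulVec w) with ht2
  set t3 := Gt⁻¹.mulVec ((Gt - G).mulVec (G⁻¹.mulVec z)) with ht3
  have hzsplit : z = Φᵀ.mulVec w + Eᵀ.mulVec w := by
    rw [hz, hΦtil, Matrix.transpose_add, Matrix.add_mulVec]
  have hGtinvz : Gt⁻¹.mulVec z = t1 + t2 - t3 := by
    have h2 : Gt⁻¹ = G⁻¹ - Gt⁻¹ * ((Gt - G) * G⁻¹) := by rw [hdec]; abel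
    calc Gt⁻¹.mulVec z = (G⁻¹ - Gt⁻¹ * ((Gt - G) * G⁻¹)).mulVec z := by rw [← h2]
      _ = G⁻¹.mulVec z - (Gt⁻¹ * ((Gt - G) * G⁻¹)).mulVec z := by rw [Matrix.sub_mulVec]
      _ = G⁻¹.mulVec z - t3 := by
          rw [ht3, ← Matrix.mulVec_mulVec, ← Matrix.mulVec_mulVec]
      _ = t1 + t2 - t3 := by
          rw [ht1, ht2, ← Matrix.mulVec_add, ← hzsplit]
  have hdiff : atil - aStar = -t1 - t2 + t3 := by
    rw [hstep, hGtinvz]; abel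
  have hwn : ‖eu w‖ ≤ e * s := opN_mulVec_le E aStar
  have hwn0 : 0 ≤ ‖eu w‖ := norm_nonneg _
  have hT1 : ‖eu t1‖ ≤ e * s / σ :=
    (pinv_bound Φ σ hsmin hsΦ w).trans ((div_le_div_iff_of_pos_right hsmin).mpr hwn)
  have hT2 : ‖eu t2‖ ≤ e ^ 2 * s / σ ^ 2 := by
    have h1 := coercive_inv_bound _ _ hσ2 hcoG (Eᵀ.mulVec w)
    refine h1.trans ?_
    have h2 : ‖eu (Eᵀ.mulVec w)‖ ≤ e ^ 2 * s := by
      have h3 := opN_transpose_mulVec_le E w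
      nlinarith
    exact (div_le_div_iff_of_pos_right hσ2).mpr h2
  have hzn : ‖eu z‖ ≤ (p + e) * (e * s) := by
    rw [hzsplit]
    have h0 : eu (Φᵀ.mulVec w + Eᵀ.mulVec w) = eu (Φᵀ.mulVec w) + eu (Eᵀ.mulVec w) := rfl
    rw [h0]
    have h1 := norm_add_le (eu (Φᵀ.mulVec w)) (eu (Eᵀ.mulVec w))
    have h2 := opN_transpose_mulVec_le Φ w
    have h3 := opN_transpose_mulVec_le E w
    nlinarith
  have hGinvz : ‖eu (G⁻¹.mulVec z)‖ ≤ (p + e) * (e * s) / σ ^ 2 :=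
    (coercive_inv_bound _ _ hσ2 hcoG z).trans ((div_le_div_iff_of_pos_right hσ2).mpr hzn)
  have hDelta : ∀ x : Fin k → ℝ, ‖eu ((Gt - G).mulVec x)‖ ≤ D * ‖eu x‖ := by
    intro x
    have hGtG : Gt - G = Φᵀ * E + (Eᵀ * Φ + Eᵀ * E) := by
      rw [hGt, hG, hΦtil, Matrix.transpose_add, Matrix.add_mul, Matrix.mul_add,
        Matrix.mul_add]
      abel
    rw [hGtG, Matrix.add_mulVec, Matrix.add_mulVec]
    have h0 : eu ((Φᵀ * E).mulVec x + ((Eᵀ * Φ).mulVec x + (Eᵀ * E).mulVec x)) =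
        eu ((Φᵀ * E).mulVec x) + (eu ((Eᵀ * Φ).mulVec x) + eu ((Eᵀ * E).mulVec x)) := rfl
    rw [h0]
    have h1 := norm_add_le (eu ((Φᵀ * E).mulVec x))
      (eu ((Eᵀ * Φ).mulVec x) + eu ((Eᵀ * E).mulVec x))
    have h1' := norm_add_le (eu ((Eᵀ * Φ).mulVec x)) (eu ((Eᵀ * E).mulVec x))
    have hb1 : ‖eu ((Φᵀ * E).mulVec x)‖ ≤ p * (e * ‖eu x‖) := by
      rw [← Matrix.mulVec_mulVec]
      refine (opN_transpose_mulVec_le Φ _).trans ?_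
      exact mul_le_mul_of_nonneg_left (opN_mulVec_le E x) p0
    have hb2 : ‖eu ((Eᵀ * Φ).mulVec x)‖ ≤ e * (p * ‖eu x‖) := by
      rw [← Matrix.mulVec_mulVec]
      refine (opN_transpose_mulVec_le E _).trans ?_
      exact mul_le_mul_of_nonneg_left (opN_mulVec_le Φ x) e0
    have hb3 : ‖eu ((Eᵀ * E).mulVec x)‖ ≤ e * (e * ‖eu x‖) := by
      rw [← Matrix.mulVec_mulVec]
      refine (opN_transpose_mulVec_le E _).trans ?_
      exact mul_le_mul_of_nonneg_left (opN_mulVec_le E x) e0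
    rw [hD]
    nlinarith [norm_nonneg (eu x)]
  have hT3 : ‖eu t3‖ ≤ D * ((p + e) * (e * s) / σ ^ 2) / (σ ^ 2 - D) := by
    have h1 := coercive_inv_bound _ _ hσD hcoGt ((Gt - G).mulVec (G⁻¹.mulVec z))
    refine h1.trans ?_
    apply (div_le_div_iff_of_pos_right hσD).mpr
    refine (hDelta _).trans ?_
    exact mul_le_mul_of_nonneg_left hGinvz hD0
  have hLeq : Real.sqrt (∑ j, (atil j - aStar j) ^ 2) = ‖eu (atil - aStar)‖ := euNorm _
  have hSeq : Real.sqrt (∑ j, (aStar j) ^ 2) = s := euNorm aStar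
  rw [hLeq, hSeq]
  have htri : ‖eu (atil - aStar)‖ ≤ ‖eu t1‖ + ‖eu t2‖ + ‖eu t3‖ := by
    rw [hdiff]
    have h0 : eu (-t1 - t2 + t3) = -(eu t1) - eu t2 + eu t3 := rfl
    rw [h0]
    calc ‖-(eu t1) - eu t2 + eu t3‖ ≤ ‖-(eu t1) - eu t2‖ + ‖eu t3‖ := norm_add_le _ _
      _ ≤ ‖-(eu t1)‖ + ‖eu t2‖ + ‖eu t3‖ := by
          linarith [norm_sub_le (-(eu t1)) (eu t2)]
      _ = ‖eu t1‖ + ‖eu t2‖ + ‖eu t3‖ := by rw [norm_neg]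
  have hrhs1 : e * s / σ = e / σ * s := by ring
  have hrhs2 : e ^ 2 * s / σ ^ 2 = e ^ 2 / σ ^ 2 * s := by ring
  have hrhs3 : ((e * D / σ ^ 4) / (1 - D / σ ^ 2)) * (p + e) * s =
      D * ((p + e) * (e * s) / σ ^ 2) / (σ ^ 2 - D) := by
    have h1 : 1 - D / σ ^ 2 = (σ ^ 2 - D) / σ ^ 2 := by field_simp
    rw [h1]
    field_simp
  linarith
end
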